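/- arXiv:2003.04616 — 5 statements merged into one kernel-verified Lean document; each statement's English description precedes it below -/
import Mathlib

section
/- Let μ, ν ∈ 𝓜 both satisfy condition (M.1) and suppose (M.2) holds for the pair (μ,ν). Then 𝓟𝓐𝓟(ℝ,ℝⁿ,μ,ν), equipped with the supremum norm ‖f‖_∞ = sup_{t∈ℝ} ‖f(t)‖, is a Banach space; equivalently, it is a closed subspace of the Banach space of bounded continuous functions ℝ → ℝⁿ: if (f_k) is a sequence in 𝓟𝓐𝓟(ℝ,ℝⁿ,μ,ν) converging uniformly on ℝ to a bounded continuous function f, then f ∈ 𝓟𝓐𝓟(ℝ,ℝⁿ,μ,ν). -/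
open MeasureTheory Filter Topology

noncomputable section

/-- The class `𝓜` of positive measures on `ℝ`: infinite total mass, finite on compact
intervals. -/
def InM (μ : Measure ℝ) : Prop :=
  μ Set.univ = ⊤ ∧ ∀ s t : ℝ, s ≤ t → μ (Set.Icc s t) < ⊤

/-- Bohr almost periodic function. -/
def AP {E : Type*} [NormedAddCommGroup E] (f : ℝ → E) : Prop :=
  Continuous f ∧ ∀ ε : ℝ, 0 < ε → ∃ l : ℝ, 0 < l ∧ ∀ a : ℝ,
    ∃ τ ∈ Set.Icc a (a + l), ∀ t : ℝ, ‖f (t + τ) - f t‖ < ε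

/-- Bounded continuous function. -/
def BC {E : Type*} [NormedAddCommGroup E] (f : ℝ → E) : Prop :=
  Continuous f ∧ ∃ C : ℝ, ∀ t : ℝ, ‖f t‖ ≤ C

/-- The ergodic space `𝓔(ℝ, E, μ, ν)`. -/
def Erg {E : Type*} [NormedAddCommGroup E] (μ ν : Measure ℝ) (f : ℝ → E) : Prop :=
  BC f ∧ Filter.Tendsto (fun z : ℝ =>
      ((ν (Set.Icc (-z) z)).toReal)⁻¹ * ∫ t in Set.Icc (-z) z, ‖f t‖ ∂μ)
    Filter.atTop (nhds 0)

/-- `(μ,ν)`-pseudo almost periodic functions `𝓟𝓐𝓟(ℝ, E, μ, ν)`. -/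
def PAP {E : Type*} [NormedAddCommGroup E] (μ ν : Measure ℝ) (f : ℝ → E) : Prop :=
  BC f ∧ ∃ g φ : ℝ → E, AP g ∧ Erg μ ν φ ∧ ∀ t, f t = g t + φ t

/-- Condition (M.1). -/
def M1 (μ : Measure ℝ) : Prop :=
  ∀ τ : ℝ, ∃ β : ℝ, 0 < β ∧ ∃ a b : ℝ, ∀ A : Set ℝ, MeasurableSet A →
    A ∩ Set.Icc a b = ∅ → μ ((fun x => x + τ) '' A) ≤ ENNReal.ofReal β * μ A

/-- Condition (M.2). -/
def M2 (μ ν : Measure ℝ) : Prop :=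
  Filter.limsup (fun r : ℝ => μ (Set.Icc (-r) r) / ν (Set.Icc (-r) r)) Filter.atTop < ⊤

open Set
open scoped NNReal

/-! Write `F k = g k + φ k`. If `μ[-r,r] / ν[-r,r]` has limsup `0`, every bounded continuous
function is ergodic. Otherwise `μ[-r,r] ≥ c ν[-r,r]` for arbitrarily large `r`, and then the
decomposition is rigid: `sup ‖g‖ ≤ sup ‖g + φ‖` for `g` almost periodic and `φ` ergodic. Indeed,
if `‖g t₀‖ > sup ‖g + φ‖`, then `‖φ‖` is bounded below near the points `t₀ - τ`, `τ` an almost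
period of `g`; finitely many translates of this set cover `ℝ`, so by (M.1) it carries a fixed
fraction of the `μ`-mass of large intervals `[-r, r]`, hence frequently a fixed fraction of their
`ν`-mass, which contradicts the ergodicity of `φ`. So the `g k` converge uniformly, their limit
is almost periodic, and `f - lim g k`, a uniform limit of ergodic functions, is ergodic by (M.2).
-/

theorem UniformCauchySeqOn.of_forall_dist_le {α β γ ι : Type*} [PseudoMetricSpace β]
    [PseudoMetricSpace γ] [Nonempty ι] [SemilatticeSup ι] {F : ι → α → β} {g : ι → α → γ}
    (hF : UniformCauchySeqOn F atTop univ)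
    (h : ∀ k m C, (∀ t, dist (F k t) (F m t) ≤ C) → ∀ t, dist (g k t) (g m t) ≤ C) :
    UniformCauchySeqOn g atTop univ := by
  rw [Metric.uniformCauchySeqOn_iff] at hF ⊢
  intro ε hε
  obtain ⟨N, hN⟩ := hF (ε / 2) (half_pos hε)
  exact ⟨N, fun m hm n hn t _ =>
    (h m n _ (fun t => (hN m hm n hn t trivial).le) t).trans_lt (half_lt_self hε)⟩

theorem UniformCauchySeqOn.exists_tendstoUniformly {α β ι : Type*} [UniformSpace β]
    [CompleteSpace β] [Nonempty ι] [SemilatticeSup ι] {F : ι → α → β}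
    (hF : UniformCauchySeqOn F atTop univ) : ∃ G, TendstoUniformly F G atTop := by
  choose G hG using fun t => cauchySeq_tendsto_of_complete (hF.cauchySeq (mem_univ t))
  exact ⟨G, tendstoUniformlyOn_univ.mp (hF.tendstoUniformlyOn_of_tendsto fun t _ => hG t)⟩

theorem not_tendsto_inv_mul_nhds_zero {a b I : ℝ → ℝ} {c B K B' K' d : ℝ} (hc : 0 < c)
    (hB : 0 ≤ B) (hB' : 0 ≤ B') (hb : Tendsto b atTop atTop)
    (ha : ∀ᶠ z in atTop, a z ≤ B * I (z + d) + K)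
    (hbd : ∀ᶠ z in atTop, b (z + d) ≤ B' * b z + K')
    (hfreq : ∃ᶠ z in atTop, c * b z ≤ a z) :
    ¬ Tendsto (fun z => (b z)⁻¹ * I z) atTop (𝓝 0) := by
  intro hI
  set ρ := c / (2 * (B * B' + 1))
  have hρ : 0 < ρ := by positivity
  have hBρ : B * ρ * B' ≤ c / 2 := by
    have hBB : B * B' / (B * B' + 1) ≤ 1 := (div_le_one (by positivity)).mpr (by linarith)
    calc B * ρ * B' = c / 2 * (B * B' / (B * B' + 1)) := by simp only [ρ]; field_simp
      _ ≤ c / 2 := mul_le_of_le_one_right (by positivity) hBB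
  have hIρ : ∀ᶠ z in atTop, I z ≤ ρ * b z := by
    filter_upwards [hI.eventually (gt_mem_nhds hρ), hb.eventually_gt_atTop 0] with z hz hbz
    rw [inv_mul_lt_iff₀ hbz] at hz
    linarith
  have hIρ' : ∀ᶠ z in atTop, I (z + d) ≤ ρ * b (z + d) :=
    (tendsto_atTop_add_const_right atTop d tendsto_id).eventually hIρ
  have hcb := (hb.const_mul_atTop hc).eventually_gt_atTop (2 * (B * ρ * K' + K))
  obtain ⟨z, hcz, haz, hbdz, hIz, hbz, hcbz⟩ := (hfreq.and_eventually
    (ha.and (hbd.and (hIρ'.and ((hb.eventually_gt_atTop 0).and hcb))))).exists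
  have h1 : B * I (z + d) ≤ B * ρ * (B' * b z + K') := by
    rw [mul_assoc]; exact mul_le_mul_of_nonneg_left (hIz.trans (by gcongr)) hB
  have h2 : B * ρ * B' * b z ≤ c / 2 * b z := mul_le_mul_of_nonneg_right hBρ hbz.le
  linarith

section AlmostPeriodic

variable {E F : Type*} [NormedAddCommGroup E] [NormedAddCommGroup F]

theorem ap_const (c : E) : AP fun _ : ℝ => c :=
  ⟨continuous_const, fun ε hε =>
    ⟨1, one_pos, fun a => ⟨a, ⟨le_rfl, by linarith⟩, fun t => by simpa using hε⟩⟩⟩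

theorem AP.uniformContinuous {g : ℝ → E} (hg : AP g) : UniformContinuous g := by
  rw [Metric.uniformContinuous_iff]
  intro ε hε
  obtain ⟨l, -, hl⟩ := hg.2 (ε / 3) (by positivity)
  have hUC : UniformContinuousOn g (Icc (-1) (l + 1)) :=
    isCompact_Icc.uniformContinuousOn_of_continuous hg.1.continuousOn
  obtain ⟨δ, hδ, hδg⟩ := Metric.uniformContinuousOn_iff.mp hUC (ε / 3) (by positivity)
  refine ⟨min δ 1, by positivity, fun {x y} hxy => ?_⟩
  obtain ⟨τ, hτ, hτg⟩ := hl (-x)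
  rw [Real.dist_eq, lt_min_iff] at hxy
  have hxy' := abs_lt.mp hxy.2
  have hmid : dist (g (x + τ)) (g (y + τ)) < ε / 3 :=
    hδg _ ⟨by linarith [hτ.1], by linarith [hτ.2]⟩ _ ⟨by linarith [hτ.1], by linarith [hτ.2]⟩
      (by rw [Real.dist_eq, add_sub_add_right_eq_sub]; exact hxy.1)
  calc dist (g x) (g y)
      ≤ dist (g x) (g (x + τ)) + dist (g (x + τ)) (g (y + τ)) + dist (g (y + τ)) (g y) :=
        dist_triangle4 _ _ _ _
    _ < ε / 3 + ε / 3 + ε / 3 := by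
        gcongr
        · rw [dist_comm, dist_eq_norm]; exact hτg x
        · rw [dist_eq_norm]; exact hτg y
    _ = ε := by ring

theorem exists_finset_abs_add_sub_lt {P : ℝ → Prop} {l δ : ℝ} (hδ : 0 < δ)
    (hP : ∀ a, ∃ τ ∈ Icc a (a + l), P τ) :
    ∃ S : Finset ℝ, ∀ x, ∃ τ, P τ ∧ ∃ s ∈ S, |x + τ - s| < δ := by
  obtain ⟨T, -, hT, hcover⟩ := finite_cover_balls_of_compact (isCompact_Icc (a := 0) (b := l)) hδ
  refine ⟨hT.toFinset, fun x => ?_⟩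
  obtain ⟨τ, hτ, hPτ⟩ := hP (-x)
  obtain ⟨s, hs, hxs⟩ := mem_iUnion₂.mp
    (hcover ⟨by linarith [hτ.1], by linarith [hτ.2]⟩ : x + τ ∈ ⋃ s ∈ T, Metric.ball s δ)
  exact ⟨τ, hPτ, s, hT.mem_toFinset.mpr hs, hxs⟩

def TotallyBoundedTranslates (g : ℝ → E) : Prop :=
  ∀ ε > 0, ∃ S : Finset ℝ, ∀ s, ∃ u ∈ S, ∀ t, ‖g (t + s) - g (t + u)‖ < ε

theorem AP.totallyBoundedTranslates {g : ℝ → E} (hg : AP g) : TotallyBoundedTranslates g := by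
  intro ε hε
  obtain ⟨δ, hδ, hδg⟩ :=
    Metric.uniformContinuous_iff.mp hg.uniformContinuous (ε / 2) (by positivity)
  obtain ⟨l, -, hl⟩ := hg.2 (ε / 2) (by positivity)
  obtain ⟨S, hS⟩ := exists_finset_abs_add_sub_lt hδ hl
  refine ⟨S, fun s => ?_⟩
  obtain ⟨τ, hτ, u, hu, hsu⟩ := hS s
  refine ⟨u, hu, fun t => ?_⟩
  have hnear : dist (g (t + s + τ)) (g (t + u)) < ε / 2 :=
    hδg (by rw [Real.dist_eq]; convert hsu using 2; ring)
  rw [← dist_eq_norm]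
  calc dist (g (t + s)) (g (t + u))
      ≤ dist (g (t + s + τ)) (g (t + s)) + dist (g (t + s + τ)) (g (t + u)) :=
        dist_triangle_left _ _ _
    _ < ε / 2 + ε / 2 := by
        gcongr
        rw [dist_eq_norm]; exact hτ (t + s)
    _ = ε := add_halves ε

theorem ap_iff_totallyBoundedTranslates {g : ℝ → E} :
    AP g ↔ Continuous g ∧ TotallyBoundedTranslates g := by
  refine ⟨fun hg => ⟨hg.1, hg.totallyBoundedTranslates⟩, fun ⟨hc, hg⟩ => ⟨hc, fun ε hε => ?_⟩⟩
  obtain ⟨S, hS⟩ := hg ε hε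
  set d := ∑ u ∈ S, |u|
  have hd : ∀ u ∈ S, |u| ≤ d := fun u hu => Finset.single_le_sum (fun _ _ => abs_nonneg _) hu
  refine ⟨2 * d + 1, by positivity, fun a => ?_⟩
  obtain ⟨u, hu, hgu⟩ := hS (-(a + d))
  have hud := abs_le.mp (hd u hu)
  refine ⟨a + d + u, ⟨by linarith, by linarith⟩, fun t => ?_⟩
  have h := hgu (t + (a + d))
  rw [add_neg_cancel_right, add_assoc t] at h
  rwa [norm_sub_rev]

theorem TotallyBoundedTranslates.prodMk {g : ℝ → E} {h : ℝ → F}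
    (hg : TotallyBoundedTranslates g) (hh : TotallyBoundedTranslates h) :
    TotallyBoundedTranslates fun t => (g t, h t) := by
  intro ε hε
  obtain ⟨S, hS⟩ := hg (ε / 2) (by positivity)
  obtain ⟨T, hT⟩ := hh (ε / 2) (by positivity)
  let Near (p : ℝ × ℝ) (s : ℝ) : Prop :=
    ∀ t, ‖g (t + s) - g (t + p.1)‖ < ε / 2 ∧ ‖h (t + s) - h (t + p.2)‖ < ε / 2
  -- one shift representing each pair of net points that is realised by some shift
  have hrep : ∀ p, ∃ r, (∃ s, Near p s) → Near p r := fun p =>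
    (em (∃ s, Near p s)).elim (fun ⟨s, hs⟩ => ⟨s, fun _ => hs⟩)
      (fun hp => ⟨0, fun hex => (hp hex).elim⟩)
  choose rep hrep using hrep
  refine ⟨(S ×ˢ T).image rep, fun s => ?_⟩
  obtain ⟨u, hu, hgu⟩ := hS s
  obtain ⟨v, hv, hhv⟩ := hT s
  have hr := hrep (u, v) ⟨s, fun t => ⟨hgu t, hhv t⟩⟩
  refine ⟨rep (u, v), Finset.mem_image_of_mem _ (Finset.mem_product.mpr ⟨hu, hv⟩), fun t => ?_⟩
  rw [Prod.mk_sub_mk, Prod.norm_def, max_lt_iff]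
  constructor
  · calc ‖g (t + s) - g (t + rep (u, v))‖
        ≤ ‖g (t + s) - g (t + u)‖ + ‖g (t + u) - g (t + rep (u, v))‖ :=
          norm_sub_le_norm_sub_add_norm_sub _ _ _
      _ < ε / 2 + ε / 2 := add_lt_add (hgu t) (by rw [norm_sub_rev]; exact (hr t).1)
      _ = ε := add_halves ε
  · calc ‖h (t + s) - h (t + rep (u, v))‖
        ≤ ‖h (t + s) - h (t + v)‖ + ‖h (t + v) - h (t + rep (u, v))‖ :=
          norm_sub_le_norm_sub_add_norm_sub _ _ _
      _ < ε / 2 + ε / 2 := add_lt_add (hhv t) (by rw [norm_sub_rev]; exact (hr t).2)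
      _ = ε := add_halves ε

theorem AP.prodMk {g : ℝ → E} {h : ℝ → F} (hg : AP g) (hh : AP h) : AP fun t => (g t, h t) :=
  ap_iff_totallyBoundedTranslates.mpr
    ⟨hg.1.prodMk hh.1, hg.totallyBoundedTranslates.prodMk hh.totallyBoundedTranslates⟩

theorem UniformContinuous.comp_ap {φ : E → F} (hφ : UniformContinuous φ) {g : ℝ → E} (hg : AP g) :
    AP fun t => φ (g t) := by
  refine ⟨hφ.continuous.comp hg.1, fun ε hε => ?_⟩
  obtain ⟨δ, hδ, hδφ⟩ := Metric.uniformContinuous_iff.mp hφ ε hε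
  obtain ⟨l, hl, hτ⟩ := hg.2 δ hδ
  refine ⟨l, hl, fun a => ?_⟩
  obtain ⟨τ, hτa, hτg⟩ := hτ a
  exact ⟨τ, hτa, fun t => by
    simpa only [dist_eq_norm] using hδφ (by rw [dist_eq_norm]; exact hτg t)⟩

theorem AP.sub {g h : ℝ → E} (hg : AP g) (hh : AP h) : AP fun t => g t - h t :=
  uniformContinuous_sub.comp_ap (hg.prodMk hh)

theorem AP.of_tendstoUniformly {ι : Type*} {p : Filter ι} [p.NeBot] {g : ι → ℝ → E} {G : ℝ → E}
    (hg : ∀ k, AP (g k)) (hG : TendstoUniformly g G p) : AP G := by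
  refine ⟨hG.continuous (.of_forall fun k => (hg k).1), fun ε hε => ?_⟩
  obtain ⟨k, hk⟩ := (Metric.tendstoUniformly_iff.mp hG (ε / 3) (by positivity)).exists
  obtain ⟨l, hl, hτ⟩ := (hg k).2 (ε / 3) (by positivity)
  refine ⟨l, hl, fun a => ?_⟩
  obtain ⟨τ, hτa, hτk⟩ := hτ a
  refine ⟨τ, hτa, fun t => ?_⟩
  rw [← dist_eq_norm]
  calc dist (G (t + τ)) (G t)
      ≤ dist (G (t + τ)) (g k (t + τ)) + dist (g k (t + τ)) (g k t) + dist (g k t) (G t) :=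
        dist_triangle4 _ _ _ _
    _ < ε / 3 + ε / 3 + ε / 3 := by
        gcongr
        · exact hk (t + τ)
        · rw [dist_eq_norm]; exact hτk t
        · rw [dist_comm]; exact hk t
    _ = ε := by ring

theorem BC.sub {φ ψ : ℝ → E} (hφ : BC φ) (hψ : BC ψ) : BC fun t => φ t - ψ t := by
  obtain ⟨hφc, C, hC⟩ := hφ
  obtain ⟨hψc, D, hD⟩ := hψ
  exact ⟨hφc.sub hψc, C + D, fun t => (norm_sub_le _ _).trans (add_le_add (hC t) (hD t))⟩

theorem BC.of_tendstoUniformly {ι : Type*} {p : Filter ι} [p.NeBot] {φ : ι → ℝ → E} {Φ : ℝ → E}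
    (hφ : ∀ k, BC (φ k)) (hΦ : TendstoUniformly φ Φ p) : BC Φ := by
  obtain ⟨k, hk⟩ := (Metric.tendstoUniformly_iff.mp hΦ 1 one_pos).exists
  obtain ⟨C, hC⟩ := (hφ k).2
  refine ⟨hΦ.continuous (.of_forall fun k => (hφ k).1), C + 1, fun t => ?_⟩
  have := hk t
  rw [dist_eq_norm] at this
  linarith [norm_le_norm_add_norm_sub' (Φ t) (φ k t), hC t]

end AlmostPeriodic

section Measures

variable {μ ν : Measure ℝ}

theorem InM.isFiniteMeasureOnCompacts (hμ : InM μ) : IsFiniteMeasureOnCompacts μ := by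
  refine ⟨fun K hK => ?_⟩
  obtain ⟨r, hr, hKr⟩ := hK.isBounded.subset_closedBall_lt 0 0
  rw [Real.closedBall_eq_Icc, zero_sub, zero_add] at hKr
  exact (measure_mono hKr).trans_lt (hμ.2 _ _ (by linarith))

theorem InM.tendsto_measure_Icc (hν : InM ν) :
    Tendsto (fun z => (ν (Icc (-z) z)).toReal) atTop atTop := by
  have := hν.isFiniteMeasureOnCompacts
  have hmono : Monotone fun z : ℝ => Icc (-z) z := fun _ _ hab =>
    Icc_subset_Icc (neg_le_neg hab) hab
  have hunion : ⋃ z : ℝ, Icc (-z) z = univ :=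
    eq_univ_of_forall fun x => mem_iUnion.mpr ⟨|x|, neg_abs_le x, le_abs_self x⟩
  have htop := tendsto_measure_iUnion_atTop (μ := ν) hmono
  rw [hunion, hν.1] at htop
  refine tendsto_atTop.mpr fun C => ?_
  filter_upwards [ENNReal.tendsto_nhds_top_iff_nnreal.mp htop C.toNNReal] with z hz
  exact (Real.le_coe_toNNReal C).trans
    (by simpa using ENNReal.toReal_mono measure_Icc_lt_top.ne hz.le)

theorem M1.exists_measure_image_add_le (hμ1 : M1 μ) (hμ : InM μ) (τ : ℝ) :
    ∃ B K : ℝ≥0, ∀ A, MeasurableSet A → μ ((· + τ) '' A) ≤ B * μ A + K := by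
  have := hμ.isFiniteMeasureOnCompacts
  obtain ⟨β, -, a, b, hβ⟩ := hμ1 τ
  refine ⟨β.toNNReal, (μ (Icc (a + τ) (b + τ))).toNNReal, fun A hA => ?_⟩
  have hsplit : (· + τ) '' A ⊆ (· + τ) '' (A \ Icc a b) ∪ Icc (a + τ) (b + τ) := by
    rw [← image_add_const_Icc, ← image_union]
    exact image_mono (subset_sdiff_union _ _)
  calc μ ((· + τ) '' A)
      ≤ μ ((· + τ) '' (A \ Icc a b)) + μ (Icc (a + τ) (b + τ)) :=
        (measure_mono hsplit).trans (measure_union_le _ _)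
    _ ≤ ENNReal.ofReal β * μ A + (μ (Icc (a + τ) (b + τ))).toNNReal := by
        rw [ENNReal.coe_toNNReal measure_Icc_lt_top.ne]
        gcongr
        exact (hβ _ (hA.diff measurableSet_Icc) sdiff_inter_self).trans
          (by gcongr; exact sdiff_subset)

theorem M1.exists_measureReal_le_of_subset_biUnion (hμ1 : M1 μ) (hμ : InM μ) (S : Finset ℝ) :
    ∃ B K : ℝ≥0, ∀ A W, MeasurableSet W → μ W ≠ ⊤ → A ⊆ ⋃ s ∈ S, (· + s) '' W →
      μ.real A ≤ B * μ.real W + K := by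
  choose B K hBK using hμ1.exists_measure_image_add_le hμ
  refine ⟨∑ s ∈ S, B s, ∑ s ∈ S, K s, fun A W hW hWfin hAW => ?_⟩
  have h : μ A ≤ ↑(∑ s ∈ S, B s) * μ W + ↑(∑ s ∈ S, K s) :=
    calc μ A ≤ ∑ s ∈ S, μ ((· + s) '' W) :=
          (measure_mono hAW).trans (measure_biUnion_finset_le S _)
      _ ≤ ∑ s ∈ S, (B s * μ W + K s) := Finset.sum_le_sum fun s _ => hBK s W hW
      _ = _ := by push_cast; rw [Finset.sum_add_distrib, Finset.sum_mul]
  refine (ENNReal.toReal_mono (by finiteness) h).trans_eq ?_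
  rw [ENNReal.toReal_add (by finiteness) (by finiteness), ENNReal.toReal_mul]
  rfl

end Measures

section Ergodic

variable {E F : Type*} [NormedAddCommGroup E] [NormedAddCommGroup F] {μ ν : Measure ℝ}

def ergMean (μ ν : Measure ℝ) (f : ℝ → E) (z : ℝ) : ℝ :=
  ((ν (Icc (-z) z)).toReal)⁻¹ * ∫ t in Icc (-z) z, ‖f t‖ ∂μ

theorem ergMean_nonneg (f : ℝ → E) (z : ℝ) : 0 ≤ ergMean μ ν f z :=
  mul_nonneg (inv_nonneg.mpr ENNReal.toReal_nonneg) (integral_nonneg fun _ => norm_nonneg _)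

theorem ergMean_le_add (hμ : InM μ) {φ₁ φ₂ : ℝ → E} {ψ : ℝ → F} (h₁ : Continuous φ₁)
    (h₂ : Continuous φ₂) (hψ : ∀ t, ‖ψ t‖ ≤ ‖φ₁ t‖ + ‖φ₂ t‖) (z : ℝ) :
    ergMean μ ν ψ z ≤ ergMean μ ν φ₁ z + ergMean μ ν φ₂ z := by
  have := hμ.isFiniteMeasureOnCompacts
  have hint₁ : IntegrableOn (fun t => ‖φ₁ t‖) (Icc (-z) z) μ := h₁.norm.integrableOn_Icc
  have hint₂ : IntegrableOn (fun t => ‖φ₂ t‖) (Icc (-z) z) μ := h₂.norm.integrableOn_Icc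
  rw [ergMean, ergMean, ergMean, ← mul_add, ← integral_add hint₁ hint₂]
  exact mul_le_mul_of_nonneg_left (integral_mono_of_nonneg (.of_forall fun _ => norm_nonneg _)
    (hint₁.add hint₂) (.of_forall hψ)) (inv_nonneg.mpr ENNReal.toReal_nonneg)

theorem ergMean_le_mul_ratio (hμ : InM μ) {ψ : ℝ → E} {C : ℝ} (hψ : ∀ t, ‖ψ t‖ ≤ C) (z : ℝ) :
    ergMean μ ν ψ z ≤ C * ((μ (Icc (-z) z)).toReal / (ν (Icc (-z) z)).toReal) := by
  have := hμ.isFiniteMeasureOnCompacts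
  have hint : ∫ t in Icc (-z) z, ‖ψ t‖ ∂μ ≤ C * (μ (Icc (-z) z)).toReal :=
    (Real.le_norm_self _).trans
      (norm_setIntegral_le_of_norm_le_const measure_Icc_lt_top fun t _ => by simpa using hψ t)
  calc ergMean μ ν ψ z ≤ ((ν (Icc (-z) z)).toReal)⁻¹ * (C * (μ (Icc (-z) z)).toReal) :=
        mul_le_mul_of_nonneg_left hint (inv_nonneg.mpr ENNReal.toReal_nonneg)
    _ = C * ((μ (Icc (-z) z)).toReal / (ν (Icc (-z) z)).toReal) := by ring

theorem Erg.sub (hμ : InM μ) {φ₁ φ₂ : ℝ → E} (h₁ : Erg μ ν φ₁) (h₂ : Erg μ ν φ₂) :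
    Erg μ ν fun t => φ₁ t - φ₂ t := by
  have hsum := (h₁.2 : Tendsto (ergMean μ ν φ₁) atTop (𝓝 0)).add
    (h₂.2 : Tendsto (ergMean μ ν φ₂) atTop (𝓝 0))
  rw [add_zero] at hsum
  exact ⟨h₁.1.sub h₂.1, squeeze_zero (ergMean_nonneg _)
    (ergMean_le_add hμ h₁.1.1 h₂.1.1 fun t => norm_sub_le _ _) hsum⟩

theorem Erg.of_limsup_eq_zero (hμ : InM μ)
    (hL : limsup (fun r : ℝ => μ (Icc (-r) r) / ν (Icc (-r) r)) atTop = 0)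
    {f : ℝ → E} (hf : BC f) : Erg μ ν f := by
  obtain ⟨C, hC⟩ := hf.2
  have hratio : Tendsto (fun z => μ (Icc (-z) z) / ν (Icc (-z) z)) atTop (𝓝 0) :=
    tendsto_of_le_liminf_of_limsup_le bot_le hL.le
  have hratio' := (ENNReal.tendsto_toReal ENNReal.zero_ne_top).comp hratio
  simp only [Function.comp_def, ENNReal.toReal_div, ENNReal.toReal_zero] at hratio'
  exact ⟨hf, squeeze_zero (ergMean_nonneg _) (ergMean_le_mul_ratio hμ hC)
    (by simpa using hratio'.const_mul C)⟩

theorem M2.exists_eventually_ratio_le (hM2 : M2 μ ν) : ∃ R ≥ 0,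
    ∀ᶠ z in atTop, (μ (Icc (-z) z)).toReal / (ν (Icc (-z) z)).toReal ≤ R := by
  refine ⟨(limsup (fun r : ℝ => μ (Icc (-r) r) / ν (Icc (-r) r)) atTop + 1).toReal,
    ENNReal.toReal_nonneg, ?_⟩
  filter_upwards [eventually_lt_of_limsup_lt (ENNReal.lt_add_right hM2.ne one_ne_zero)] with z hz
  rw [← ENNReal.toReal_div]
  exact ENNReal.toReal_mono (by finiteness) hz.le

theorem exists_frequently_mul_le_of_limsup_ne_zero (hμ : InM μ)
    (hL : limsup (fun r : ℝ => μ (Icc (-r) r) / ν (Icc (-r) r)) atTop ≠ 0) :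
    ∃ c > 0, ∃ᶠ z in atTop, c * (ν (Icc (-z) z)).toReal ≤ (μ (Icc (-z) z)).toReal := by
  have := hμ.isFiniteMeasureOnCompacts
  obtain ⟨c, hc0, hcL⟩ := exists_between (pos_iff_ne_zero.mpr hL)
  refine ⟨c.toReal, ENNReal.toReal_pos hc0.ne' hcL.ne_top,
    (frequently_lt_of_lt_limsup (by isBoundedDefault) hcL).mono fun z hz => ?_⟩
  rw [← ENNReal.toReal_mul]
  exact ENNReal.toReal_mono measure_Icc_lt_top.ne (ENNReal.mul_lt_of_lt_div hz).le

theorem Erg.of_tendstoUniformly (hμ : InM μ) (hM2 : M2 μ ν) {ι : Type*} {p : Filter ι} [p.NeBot]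
    {φ : ι → ℝ → E} {Φ : ℝ → E} (hφ : ∀ k, Erg μ ν (φ k)) (hΦ : TendstoUniformly φ Φ p) :
    Erg μ ν Φ := by
  have hΦbc := BC.of_tendstoUniformly (fun k => (hφ k).1) hΦ
  refine ⟨hΦbc, tendsto_order.2 ⟨fun a ha => .of_forall fun z => ha.trans_le (ergMean_nonneg _ z),
    fun ε hε => ?_⟩⟩
  obtain ⟨R, hR0, hR⟩ := hM2.exists_eventually_ratio_le
  set η := ε / (2 * (R + 1))
  have hηR : η * R ≤ ε / 2 := by
    calc η * R ≤ η * (R + 1) := by gcongr; linarith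
      _ = ε / 2 := by simp only [η]; field_simp
  obtain ⟨k, hk⟩ := (Metric.tendstoUniformly_iff.mp hΦ η (by positivity)).exists
  filter_upwards [(hφ k).2.eventually (gt_mem_nhds (half_pos hε)), hR] with z hkz hRz
  have hdiff : ergMean μ ν (fun t => Φ t - φ k t) z ≤ ε / 2 :=
    (ergMean_le_mul_ratio hμ (fun t => by rw [← dist_eq_norm]; exact (hk t).le) z).trans
      ((mul_le_mul_of_nonneg_left hRz (by positivity)).trans hηR)
  calc ergMean μ ν Φ z
      ≤ ergMean μ ν (φ k) z + ergMean μ ν (fun t => Φ t - φ k t) z :=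
        ergMean_le_add hμ (hφ k).1.1 (hΦbc.1.sub (hφ k).1.1)
          (fun t => norm_le_norm_add_norm_sub' (Φ t) (φ k t)) z
    _ < ε / 2 + ε / 2 := add_lt_add_of_lt_of_le hkz hdiff
    _ = ε := add_halves ε

theorem Erg.exists_norm_lt_of_forall_exists_sub_mem (hμ : InM μ) (hν : InM ν) (hμ1 : M1 μ)
    (hν1 : M1 ν) {c : ℝ} (hc : 0 < c)
    (hfreq : ∃ᶠ z in atTop, c * (ν (Icc (-z) z)).toReal ≤ (μ (Icc (-z) z)).toReal)
    {φ : ℝ → E} (hφ : Erg μ ν φ) {U : Set ℝ} (hU : MeasurableSet U) (S : Finset ℝ)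
    (hS : ∀ x, ∃ s ∈ S, x - s ∈ U) {ε : ℝ} (hε : 0 < ε) : ∃ x ∈ U, ‖φ x‖ < ε := by
  by_contra! hφU
  have := hμ.isFiniteMeasureOnCompacts
  have := hν.isFiniteMeasureOnCompacts
  set d := ∑ s ∈ S, |s|
  have hd : ∀ s ∈ S, |s| ≤ d := fun s hs => Finset.single_le_sum (fun _ _ => abs_nonneg _) hs
  obtain ⟨B, K, hBK⟩ := hμ1.exists_measureReal_le_of_subset_biUnion hμ S
  obtain ⟨B', K', hBK'⟩ := hν1.exists_measureReal_le_of_subset_biUnion hν {d, -d}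
  refine not_tendsto_inv_mul_nhds_zero (a := fun z => (μ (Icc (-z) z)).toReal)
    (I := fun z => ∫ t in Icc (-z) z, ‖φ t‖ ∂μ) (K := K) (K' := K') (d := d) hc
    (div_nonneg B.2 hε.le) B'.2 hν.tendsto_measure_Icc (.of_forall fun z => ?_) ?_ hfreq hφ.2
  · set W := U ∩ Icc (-(z + d)) (z + d)
    have hW : MeasurableSet W := hU.inter measurableSet_Icc
    have hcover : Icc (-z) z ⊆ ⋃ s ∈ S, (· + s) '' W := fun x hx => by
      obtain ⟨s, hs, hxs⟩ := hS x
      have := abs_le.mp (hd s hs)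
      exact mem_iUnion₂.mpr ⟨s, hs, x - s,
        ⟨hxs, by linarith [hx.1], by linarith [hx.2]⟩, sub_add_cancel x s⟩
    have hφW : ε * μ.real W ≤ ∫ t in Icc (-(z + d)) (z + d), ‖φ t‖ ∂μ :=
      (setIntegral_ge_of_const_le_real hW (measure_ne_top_of_subset inter_subset_right
          measure_Icc_lt_top.ne) (fun x hx => hφU x hx.1)
          (hφ.1.1.norm.integrableOn_Icc.mono_set inter_subset_right)).trans
        (setIntegral_mono_set hφ.1.1.norm.integrableOn_Icc (.of_forall fun _ => norm_nonneg _)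
          inter_subset_right.eventuallyLE)
    calc (μ (Icc (-z) z)).toReal ≤ B * μ.real W + K :=
          hBK _ _ hW (measure_ne_top_of_subset inter_subset_right measure_Icc_lt_top.ne) hcover
      _ = B / ε * (ε * μ.real W) + K := by field_simp
      _ ≤ B / ε * ∫ t in Icc (-(z + d)) (z + d), ‖φ t‖ ∂μ + K := by gcongr
  · filter_upwards [eventually_ge_atTop d] with z hz
    refine hBK' _ _ measurableSet_Icc measure_Icc_lt_top.ne fun x hx => ?_
    rcases le_total 0 x with hx0 | hx0
    · exact mem_iUnion₂.mpr ⟨d, by simp, x - d,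
        ⟨by linarith [hx.1], by linarith [hx.2]⟩, sub_add_cancel x d⟩
    · exact mem_iUnion₂.mpr ⟨-d, by simp, x + d,
        ⟨by linarith [hx.1], by linarith [hx.2]⟩, add_neg_cancel_right x d⟩

theorem AP.norm_le_of_forall_norm_add_le (hμ : InM μ) (hν : InM ν) (hμ1 : M1 μ) (hν1 : M1 ν)
    {c : ℝ} (hc : 0 < c)
    (hfreq : ∃ᶠ z in atTop, c * (ν (Icc (-z) z)).toReal ≤ (μ (Icc (-z) z)).toReal)
    {g φ : ℝ → E} (hg : AP g) (hφ : Erg μ ν φ) {C : ℝ} (hC : ∀ t, ‖g t + φ t‖ ≤ C) (t₀ : ℝ) :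
    ‖g t₀‖ ≤ C := by
  by_contra! hgt
  set ε := (‖g t₀‖ - C) / 3 with hε_def
  have hε : 0 < ε := div_pos (sub_pos.mpr hgt) three_pos
  obtain ⟨δ, hδ, hδg⟩ := Metric.uniformContinuous_iff.mp hg.uniformContinuous ε hε
  obtain ⟨l, -, hl⟩ := hg.2 ε hε
  obtain ⟨S, hS⟩ := exists_finset_abs_add_sub_lt hδ hl
  -- On `U`, `‖g‖ > C + ε`, so `‖φ‖ > ε`; yet finitely many translates of `U` cover `ℝ`.
  let U := ⋃ τ ∈ {τ | ∀ t, ‖g (t + τ) - g t‖ < ε}, Metric.ball (t₀ - τ) δ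
  have hU : MeasurableSet U := (isOpen_biUnion fun _ _ => Metric.isOpen_ball).measurableSet
  have hSU : ∀ x, ∃ s ∈ S, x - s ∈ U := fun x => by
    obtain ⟨τ, hτ, s, hs, hxs⟩ := hS (x - t₀)
    refine ⟨s, hs, mem_iUnion₂.mpr ⟨τ, hτ, ?_⟩⟩
    rw [Metric.mem_ball, Real.dist_eq]
    convert hxs using 2
    ring
  obtain ⟨x, hxU, hφx⟩ :=
    hφ.exists_norm_lt_of_forall_exists_sub_mem hμ hν hμ1 hν1 hc hfreq hU S hSU hε
  obtain ⟨τ, hτ, hxτ⟩ := mem_iUnion₂.mp hxU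
  have h₁ : ‖g x - g (t₀ - τ)‖ < ε := by simpa only [dist_eq_norm] using hδg hxτ
  have h₂ : ‖g t₀ - g (t₀ - τ)‖ < ε := by simpa using hτ (t₀ - τ)
  have h₃ := norm_sub_le_norm_sub_add_norm_sub (g t₀) (g (t₀ - τ)) (g x)
  rw [norm_sub_rev (g (t₀ - τ))] at h₃
  linarith [norm_sub_norm_le (g t₀) (g x), norm_le_add_norm_add (g x) (φ x), hC x]

end Ergodic

theorem pap_closed_under_uniform_limits_general {n : ℕ} (μ ν : Measure ℝ)
    (hμ : InM μ) (hν : InM ν) (hμ1 : M1 μ) (hν1 : M1 ν) (hM2 : M2 μ ν)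
    (F : ℕ → ℝ → (Fin n → ℝ)) (f : ℝ → (Fin n → ℝ))
    (hF : ∀ k, PAP μ ν (F k))
    (hconv : TendstoUniformly F f Filter.atTop) :
    PAP μ ν f := by
  have hf : BC f := BC.of_tendstoUniformly (fun k => (hF k).1) hconv
  rcases eq_or_ne (limsup (fun r : ℝ => μ (Icc (-r) r) / ν (Icc (-r) r)) atTop) 0 with hL | hL
  · exact ⟨hf, fun _ => 0, f, ap_const 0, Erg.of_limsup_eq_zero hμ hL hf,
      fun t => (zero_add _).symm⟩
  obtain ⟨c, hc, hfreq⟩ := exists_frequently_mul_le_of_limsup_ne_zero hμ hL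
  choose g φ hg hφ hFgφ using fun k => (hF k).2
  have hgC : UniformCauchySeqOn g atTop univ :=
    (tendstoUniformlyOn_univ.mpr hconv).uniformCauchySeqOn.of_forall_dist_le fun k m C hC t => by
      simp only [dist_eq_norm] at hC ⊢
      refine ((hg k).sub (hg m)).norm_le_of_forall_norm_add_le hμ hν hμ1 hν1 hc hfreq
        ((hφ k).sub hμ (hφ m)) (fun s => ?_) t
      have hCs := hC s
      rwa [hFgφ, hFgφ, add_sub_add_comm] at hCs
  obtain ⟨G, hG⟩ := hgC.exists_tendstoUniformly
  have hφG : TendstoUniformly φ (f - G) atTop := by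
    convert hconv.sub hG using 1
    funext k t
    simp [hFgφ]
  exact ⟨hf, G, _, AP.of_tendstoUniformly hg hG, Erg.of_tendstoUniformly hμ hM2 hφ hφG,
    fun t => (add_sub_cancel _ _).symm⟩

theorem pap_closed_under_uniform_limits {n : ℕ} (μ ν : Measure ℝ)
    (hμ : InM μ) (hν : InM ν) (hμ1 : M1 μ) (hν1 : M1 ν) (hM2 : M2 μ ν)
    (F : ℕ → ℝ → (Fin n → ℝ)) (f : ℝ → (Fin n → ℝ))
    (hF : ∀ k, PAP μ ν (F k)) (hf : BC f)
    (hconv : TendstoUniformly F f Filter.atTop) :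
    PAP μ ν f :=
  pap_closed_under_uniform_limits_general μ ν hμ hν hμ1 hν1 hM2 F f hF hconv
end
end

section
/- Let μ, ν ∈ 𝓜 satisfy condition (M.2), let p > 1, and let L : ℝ → [0,∞) be measurable with ∫_ℝ L(t)^p dμ(t) < ∞. Then lim_{z→+∞} (1/ν([−z,z])) ∫_{−z}^{z} L(t) dμ(t) = 0. Consequently, every bounded continuous function h : ℝ → ℝ for which there is a constant C ≥ 0 with |h(t)| ≤ C·L(t) for all t ∈ ℝ belongs to 𝓔(ℝ,ℝ,μ,ν). -/
/-!
By Hölder's inequality, `∫_{[-z,z]} |f| dμ ≤ ‖f‖_p · μ([-z,z])^(1 - 1/p)` for `f ∈ Lᵖ(μ)`.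
Condition (M.2) bounds `μ([-z,z])` by `c · ν([-z,z])` for large `z`, so the `ν`-average of `|f|`
is `O(ν([-z,z])^(-1/p))`, which tends to `0` because `ν` has infinite mass. A function dominated
by `C · L` lies in `Lᵖ(μ)` as well, so the same bound applies to it.
-/

open MeasureTheory Filter Topology

noncomputable section

open scoped ENNReal

theorem ENNReal.one_div_toReal_le_one {p : ℝ≥0∞} (hp : 1 ≤ p) : 1 / p.toReal ≤ 1 := by
  rw [one_div, ← ENNReal.toReal_inv]
  exact ENNReal.toReal_le_of_le_ofReal zero_le_one (by simpa using ENNReal.inv_le_one.2 hp)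

section LpAverages

variable {α E : Type*} [MeasurableSpace α] [NormedAddCommGroup E] {μ : Measure α} {f : α → E}
  {p : ℝ≥0∞}

theorem eLpNorm_one_restrict_le_eLpNorm_mul_measure_rpow (hf : AEStronglyMeasurable f μ)
    (hp : 1 ≤ p) (s : Set α) :
    eLpNorm f 1 (μ.restrict s) ≤ eLpNorm f p μ * μ s ^ (1 - 1 / p.toReal) :=
  calc eLpNorm f 1 (μ.restrict s)
      ≤ eLpNorm f p (μ.restrict s) * μ.restrict s Set.univ ^
          (1 / (1 : ℝ≥0∞).toReal - 1 / p.toReal) :=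
        eLpNorm_le_eLpNorm_mul_rpow_measure_univ hp hf.restrict
    _ ≤ eLpNorm f p μ * μ s ^ (1 - 1 / p.toReal) := by
        simp only [Measure.restrict_apply_univ, ENNReal.toReal_one, div_one]
        gcongr
        exact Measure.restrict_le_self

theorem setIntegral_norm_le_eLpNorm_mul_measure_rpow (hf : MemLp f p μ) (hp : 1 ≤ p)
    {s : Set α} (hs : μ s ≠ ∞) :
    ∫ x in s, ‖f x‖ ∂μ ≤ (eLpNorm f p μ).toReal * (μ s).toReal ^ (1 - 1 / p.toReal) := by
  rw [integral_norm_eq_lintegral_enorm hf.1.restrict, ← eLpNorm_one_eq_lintegral_enorm,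
    ENNReal.toReal_rpow, ← ENNReal.toReal_mul]
  refine ENNReal.toReal_mono ?_ (eLpNorm_one_restrict_le_eLpNorm_mul_measure_rpow hf.1 hp s)
  exact ENNReal.mul_ne_top hf.eLpNorm_ne_top (ENNReal.rpow_ne_top_of_nonneg
    (sub_nonneg.2 (ENNReal.one_div_toReal_le_one hp)) hs)

theorem tendsto_inv_measure_mul_setIntegral_norm {ι : Type*} {l : Filter ι} {ν : Measure α}
    {s : ι → Set α} (hf : MemLp f p μ) (hp : 1 ≤ p) (hp_top : p ≠ ∞) {c : ℝ≥0∞} (hc : c ≠ ∞)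
    (hμν : ∀ᶠ i in l, μ (s i) ≤ c * ν (s i))
    (hν : Tendsto (fun i ↦ (ν (s i)).toReal) l atTop) :
    Tendsto (fun i ↦ (ν (s i)).toReal⁻¹ * ∫ x in s i, ‖f x‖ ∂μ) l (𝓝 0) := by
  set r := 1 / p.toReal
  have hr : 0 < r := one_div_pos.2 (ENNReal.toReal_pos (zero_lt_one.trans_le hp).ne' hp_top)
  have hbound : ∀ᶠ i in l,
      (ν (s i)).toReal⁻¹ * ∫ x in s i, ‖f x‖ ∂μ ≤
        (eLpNorm f p μ).toReal * c.toReal ^ (1 - r) * (ν (s i)).toReal ^ (-r) := by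
    filter_upwards [hμν, hν.eventually_gt_atTop 0] with i hμν_i hν_pos
    have hν_top : ν (s i) ≠ ∞ := (ENNReal.toReal_pos_iff.1 hν_pos).2.ne
    have hμ_top : μ (s i) ≠ ∞ := ne_top_of_le_ne_top (ENNReal.mul_ne_top hc hν_top) hμν_i
    have hμ_le : (μ (s i)).toReal ≤ c.toReal * (ν (s i)).toReal := by
      rw [← ENNReal.toReal_mul]
      exact ENNReal.toReal_mono (ENNReal.mul_ne_top hc hν_top) hμν_i
    calc (ν (s i)).toReal⁻¹ * ∫ x in s i, ‖f x‖ ∂μ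
        ≤ (ν (s i)).toReal⁻¹ * ((eLpNorm f p μ).toReal * (μ (s i)).toReal ^ (1 - r)) := by
          gcongr
          exact setIntegral_norm_le_eLpNorm_mul_measure_rpow hf hp hμ_top
      _ ≤ (ν (s i)).toReal⁻¹ * ((eLpNorm f p μ).toReal *
            (c.toReal * (ν (s i)).toReal) ^ (1 - r)) := by
          have := sub_nonneg.2 (ENNReal.one_div_toReal_le_one hp)
          gcongr
      _ = (eLpNorm f p μ).toReal * c.toReal ^ (1 - r) * (ν (s i)).toReal ^ (-r) := by
          rw [Real.mul_rpow ENNReal.toReal_nonneg hν_pos.le, Real.rpow_sub hν_pos, Real.rpow_one,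
            Real.rpow_neg hν_pos.le]
          field_simp
  have hlim : Tendsto (fun i ↦
      (eLpNorm f p μ).toReal * c.toReal ^ (1 - r) * (ν (s i)).toReal ^ (-r)) l (𝓝 0) := by
    simpa using ((tendsto_rpow_neg_atTop hr).comp hν).const_mul _
  refine squeeze_zero' (Eventually.of_forall fun i ↦ ?_) hbound hlim
  positivity

end LpAverages

theorem InM.tendsto_measure_Icc_toReal_atTop {ν : Measure ℝ} (hν : InM ν) :
    Tendsto (fun z : ℝ ↦ (ν (Set.Icc (-z) z)).toReal) atTop atTop := by
  have hmono : Monotone fun z : ℝ ↦ Set.Icc (-z) z := fun _ _ h ↦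
    Set.Icc_subset_Icc (neg_le_neg h) h
  have hunion : (⋃ z : ℝ, Set.Icc (-z) z) = Set.univ :=
    Set.eq_univ_of_forall fun x ↦ Set.mem_iUnion.2 ⟨|x|, abs_le.1 le_rfl⟩
  have hlim : Tendsto (fun z : ℝ ↦ ν (Set.Icc (-z) z)) atTop (𝓝 ∞) := by
    simpa only [Function.comp_def, hunion, hν.1] using
      tendsto_measure_iUnion_atTop (μ := ν) hmono
  rw [tendsto_atTop]
  intro M
  filter_upwards [hlim.eventually (lt_mem_nhds ENNReal.ofReal_lt_top), eventually_ge_atTop 0]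
    with z hz hz0
  exact (ENNReal.ofReal_le_iff_le_toReal (hν.2 _ _ (by linarith)).ne).1 hz.le

theorem M2.exists_eventually_measure_Icc_le_mul {μ ν : Measure ℝ} (h : M2 μ ν) :
    ∃ c ≠ ∞, ∀ᶠ r in atTop, μ (Set.Icc (-r) r) ≤ c * ν (Set.Icc (-r) r) := by
  obtain ⟨c, hlt, hc⟩ := exists_between h
  refine ⟨c, hc.ne, (eventually_lt_of_limsup_lt hlt).mono fun r hr ↦ ?_⟩
  exact (ENNReal.div_le_iff_le_mul (.inr hc.ne) (.inr (pos_of_gt hlt).ne')).1 hr.le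

theorem lp_implies_ergodic_general (μ ν : Measure ℝ) (hν : InM ν) (hM2 : M2 μ ν)
    (p : ℝ) (hp : 1 < p) (L : ℝ → ℝ) (hLmeas : Measurable L)
    (hLnonneg : ∀ t, 0 ≤ L t) (hLp : Integrable (fun t => L t ^ p) μ) :
    Filter.Tendsto (fun z : ℝ =>
        ((ν (Set.Icc (-z) z)).toReal)⁻¹ * ∫ t in Set.Icc (-z) z, L t ∂μ)
      Filter.atTop (nhds 0) ∧
    ∀ h : ℝ → ℝ, BC h → ∀ C : ℝ, 0 ≤ C → (∀ t, |h t| ≤ C * L t) → Erg μ ν h := by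
  have hL : MemLp L (ENNReal.ofReal p) μ := by
    rw [← integrable_norm_rpow_iff hLmeas.aestronglyMeasurable
      (ENNReal.ofReal_pos.2 (by linarith)).ne' ENNReal.ofReal_ne_top,
      ENNReal.toReal_ofReal (by linarith)]
    simpa only [Real.norm_of_nonneg (hLnonneg _)] using hLp
  obtain ⟨c, hc, hμν⟩ := hM2.exists_eventually_measure_Icc_le_mul
  have hp1 : 1 ≤ ENNReal.ofReal p := by simpa using hp.le
  have hergodic {f : ℝ → ℝ} (hf : MemLp f (ENNReal.ofReal p) μ) :=
    tendsto_inv_measure_mul_setIntegral_norm hf hp1 ENNReal.ofReal_ne_top hc hμν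
      hν.tendsto_measure_Icc_toReal_atTop
  refine ⟨by simpa only [Real.norm_of_nonneg (hLnonneg _)] using hergodic hL,
    fun h hh C hC hhL ↦ ⟨hh, hergodic ?_⟩⟩
  refine (hL.const_mul C).of_le hh.1.aestronglyMeasurable (Eventually.of_forall fun t ↦ ?_)
  simpa only [Real.norm_eq_abs, abs_mul, abs_of_nonneg hC, abs_of_nonneg (hLnonneg t)] using
    hhL t

theorem lp_implies_ergodic (μ ν : Measure ℝ) (hμ : InM μ) (hν : InM ν) (hM2 : M2 μ ν)
    (p : ℝ) (hp : 1 < p) (L : ℝ → ℝ) (hLmeas : Measurable L)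
    (hLnonneg : ∀ t, 0 ≤ L t) (hLp : Integrable (fun t => L t ^ p) μ) :
    Filter.Tendsto (fun z : ℝ =>
        ((ν (Set.Icc (-z) z)).toReal)⁻¹ * ∫ t in Set.Icc (-z) z, L t ∂μ)
      Filter.atTop (nhds 0) ∧
    ∀ h : ℝ → ℝ, BC h → ∀ C : ℝ, 0 ≤ C → (∀ t, |h t| ≤ C * L t) → Erg μ ν h :=
  lp_implies_ergodic_general μ ν hν hM2 p hp L hLmeas hLnonneg hLp
end
end

section
/- Let μ, ν ∈ 𝓜 satisfy condition (M.2) and let p > 1. Let Λ : ℝ×ℝ → ℝ be continuous, almost periodic in t uniformly in x on compact sets, and Lipschitz in the second variable with a positive continuous function L^Λ : ℝ → (0,∞) satisfying ∫_ℝ L^Λ(t)^p dμ(t) < ∞ and |Λ(t,u) − Λ(t,v)| ≤ L^Λ(t)|u−v| for all t, u, v ∈ ℝ. Then for every y ∈ 𝓟𝓐𝓟(ℝ,ℝ,μ,ν) and every θ ∈ ℝ, the function s ↦ Λ(s, y(s−θ)) belongs to 𝓟𝓐𝓟(ℝ,ℝ,μ,ν). -/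
/-!
Write `Λ (s, y (s - θ)) = Λ (s, 0) + (Λ (s, y (s - θ)) - Λ (s, 0))`. The first summand is almost
periodic because `Λ` is almost periodic uniformly on `{0}`. The second is bounded by `‖y‖∞ L(s)`,
and `L ≤ A + A ^ (1 - p) L ^ p` for every `A > 0`, so its mean over `[-z, z]` is at most
`‖y‖∞ (A μ[-z, z] + A ^ (1 - p) ∫ L ^ p dμ) / ν[-z, z]`. By (M.2) the first part is `O(A)`,
and the second tends to `0` since `ν[-z, z] → ∞`.
-/

open MeasureTheory Filter Topology

noncomputable section

/-- Almost periodic in `t`, uniformly with respect to `x` in compact sets. -/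
def APU (F : ℝ → ℝ → ℝ) : Prop :=
  Continuous (fun p : ℝ × ℝ => F p.1 p.2) ∧
  ∀ K : Set ℝ, IsCompact K → ∀ ε : ℝ, 0 < ε → ∃ l : ℝ, 0 < l ∧ ∀ a : ℝ,
    ∃ τ ∈ Set.Icc a (a + l), ∀ t : ℝ, ∀ x ∈ K, |F (t + τ) x - F t x| < ε

/-- Uniformly ergodic (with respect to compact sets in the second variable). -/
def ErgU (μ ν : Measure ℝ) (H : ℝ → ℝ → ℝ) : Prop :=
  ∀ K : Set ℝ, IsCompact K →
    Filter.Tendsto (fun z : ℝ =>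
        ((ν (Set.Icc (-z) z)).toReal)⁻¹ *
          ∫ t in Set.Icc (-z) z, (⨆ x : K, |H t (x : ℝ)|) ∂μ)
      Filter.atTop (nhds 0)

/-- `(μ,ν)`-pseudo almost periodic in `t` uniformly in `x`. -/
def PAPU (μ ν : Measure ℝ) (F : ℝ → ℝ → ℝ) : Prop :=
  ∃ G H : ℝ → ℝ → ℝ, APU G ∧ Continuous (fun p : ℝ × ℝ => H p.1 p.2) ∧
    ErgU μ ν H ∧ ∀ t x, F t x = G t x + H t x


lemma InM.isFiniteMeasureOnCompacts_s5 {μ : Measure ℝ} (hμ : InM μ) :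
    IsFiniteMeasureOnCompacts μ where
  lt_top_of_isCompact K hK := by
    obtain ⟨a, b, hab, hKab⟩ : ∃ a b, a ≤ b ∧ K ⊆ Set.Icc a b := by
      rcases K.eq_empty_or_nonempty with rfl | ⟨x, hx⟩
      · exact ⟨0, 0, le_rfl, Set.empty_subset _⟩
      · have hsub := hK.isBounded.subset_Icc_sInf_sSup
        exact ⟨_, _, (hsub hx).1.trans (hsub hx).2, hsub⟩
    exact (measure_mono hKab).trans_lt (hμ.2 a b hab)

lemma InM.tendsto_measureReal_Icc {ν : Measure ℝ} (hν : InM ν) :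
    Tendsto (fun z : ℝ => (ν (Set.Icc (-z) z)).toReal) atTop atTop := by
  have hmono : Monotone (fun z : ℝ => Set.Icc (-z) z) :=
    fun _ _ h => Set.Icc_subset_Icc (neg_le_neg h) h
  have hunion : (⋃ z : ℝ, Set.Icc (-z) z) = Set.univ :=
    Set.eq_univ_of_forall fun x => Set.mem_iUnion.2 ⟨|x|, abs_le.1 le_rfl⟩
  have hlim := tendsto_measure_iUnion_atTop (μ := ν) hmono
  rw [hunion, hν.1] at hlim
  rw [← ENNReal.tendsto_ofReal_nhds_top]
  refine hlim.congr' ?_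
  filter_upwards [eventually_ge_atTop 0] with z hz
  exact (ENNReal.ofReal_toReal (hν.2 _ _ (by linarith)).ne).symm

lemma M2.exists_eventually_measureReal_le {μ ν : Measure ℝ} (hν : InM ν) (h : M2 μ ν) :
    ∃ R : ℝ, 0 ≤ R ∧ ∀ᶠ z in atTop,
      (μ (Set.Icc (-z) z)).toReal ≤ R * (ν (Set.Icc (-z) z)).toReal := by
  obtain ⟨b, hlt, hb⟩ := exists_between h
  refine ⟨b.toReal, ENNReal.toReal_nonneg, ?_⟩
  filter_upwards [eventually_lt_of_limsup_lt hlt, eventually_ge_atTop 0] with z hz hz0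
  have hνfin : ν (Set.Icc (-z) z) ≠ ⊤ := (hν.2 _ _ (by linarith)).ne
  have hle := (ENNReal.div_le_iff_le_mul (Or.inr hb.ne) (Or.inl hνfin)).1 hz.le
  rw [← ENNReal.toReal_mul]
  exact ENNReal.toReal_mono (ENNReal.mul_ne_top hb.ne hνfin) hle

lemma APU.exists_bound {Λ : ℝ → ℝ → ℝ} (h : APU Λ) {K : Set ℝ} (hK : IsCompact K) :
    ∃ M : ℝ, ∀ t, ∀ x ∈ K, |Λ t x| ≤ M := by
  obtain ⟨l, -, hl⟩ := h.2 K hK 1 one_pos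
  obtain ⟨M, hM⟩ := (isCompact_Icc.prod hK).exists_bound_of_continuousOn
    (h.1.continuousOn (s := Set.Icc (0 : ℝ) l ×ˢ K))
  refine ⟨M + 1, fun t x hx => ?_⟩
  -- translate `t` back into the window `[0, l]` by an almost period
  obtain ⟨τ, ⟨hτl, hτr⟩, hτ⟩ := hl (t - l)
  have hwin : |Λ (t - τ) x| ≤ M :=
    hM (t - τ, x) ⟨⟨by linarith, by linarith⟩, hx⟩
  have hshift := hτ (t - τ) x hx
  rw [sub_add_cancel] at hshift
  linarith [abs_sub_abs_le_abs_sub (Λ t x) (Λ (t - τ) x)]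

lemma APU.ap_apply {Λ : ℝ → ℝ → ℝ} (h : APU Λ) (x : ℝ) : AP (fun t => Λ t x) := by
  refine ⟨h.1.comp (continuous_id.prodMk continuous_const), fun ε hε => ?_⟩
  obtain ⟨l, hl, hτ⟩ := h.2 {x} isCompact_singleton ε hε
  exact ⟨l, hl, fun a => (hτ a).imp fun τ ⟨hτa, hτ⟩ => ⟨hτa, fun t => hτ t x rfl⟩⟩

lemma le_add_rpow_mul_rpow_one_sub {p A L : ℝ} (hp : 1 ≤ p) (hA : 0 < A) (hL : 0 ≤ L) :
    L ≤ A + L ^ p * A ^ (1 - p) := by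
  rcases le_or_gt L A with hLA | hAL
  · nlinarith [mul_nonneg (Real.rpow_nonneg hL p) (Real.rpow_nonneg hA.le (1 - p))]
  · have hL' : 0 < L := hA.trans hAL
    calc L = L ^ p * L ^ (1 - p) := by rw [← Real.rpow_add hL']; norm_num
      _ ≤ L ^ p * A ^ (1 - p) := mul_le_mul_of_nonneg_left
          (Real.rpow_le_rpow_of_nonpos hA hAL.le (by linarith)) (Real.rpow_nonneg hL p)
      _ ≤ A + L ^ p * A ^ (1 - p) := by linarith

section Ergodic

variable {μ ν : Measure ℝ} {E : Type*} [NormedAddCommGroup E]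

lemma setIntegral_norm_le_of_norm_le {φ : ℝ → E} {L : ℝ → ℝ} {p A : ℝ} {s : Set ℝ}
    (hs : MeasurableSet s) (hμs : μ s ≠ ⊤) (hφ : IntegrableOn (fun t => ‖φ t‖) s μ)
    (hp : 1 ≤ p) (hA : 0 < A) (hL0 : ∀ t, 0 ≤ L t) (hLp : Integrable (fun t => L t ^ p) μ)
    (hφL : ∀ t, ‖φ t‖ ≤ L t) :
    ∫ t in s, ‖φ t‖ ∂μ ≤ A * (μ s).toReal + A ^ (1 - p) * ∫ t, L t ^ p ∂μ := by
  have hLp_nonneg : ∀ t, 0 ≤ L t ^ p := fun t => Real.rpow_nonneg (hL0 t) p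
  have hA_int : IntegrableOn (fun _ => A) s μ := integrableOn_const hμs
  have hLp_int : IntegrableOn (fun t => A ^ (1 - p) * L t ^ p) s μ :=
    hLp.integrableOn.const_mul _
  calc ∫ t in s, ‖φ t‖ ∂μ ≤ ∫ t in s, (A + A ^ (1 - p) * L t ^ p) ∂μ :=
        setIntegral_mono_on hφ (hA_int.add hLp_int) hs fun t _ => by
          linarith [hφL t, le_add_rpow_mul_rpow_one_sub hp hA (hL0 t)]
    _ = A * (μ s).toReal + A ^ (1 - p) * ∫ t in s, L t ^ p ∂μ := by
        rw [integral_add hA_int hLp_int,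
          setIntegral_const, integral_const_mul, smul_eq_mul, mul_comm A]
        rfl
    _ ≤ A * (μ s).toReal + A ^ (1 - p) * ∫ t, L t ^ p ∂μ := by
        gcongr A * _ + _ * ?_
        exact setIntegral_le_integral hLp (Eventually.of_forall hLp_nonneg)

lemma Erg.of_norm_le_of_integrable_rpow [IsFiniteMeasureOnCompacts μ] (hν : InM ν)
    (hM2 : M2 μ ν) {φ : ℝ → E} {L : ℝ → ℝ} {p : ℝ} (hp : 1 ≤ p) (hφ : BC φ)
    (hL0 : ∀ t, 0 ≤ L t) (hLp : Integrable (fun t => L t ^ p) μ)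
    (hφL : ∀ t, ‖φ t‖ ≤ L t) : Erg μ ν φ := by
  refine ⟨hφ, NormedAddGroup.tendsto_nhds_zero.2 fun ε hε => ?_⟩
  obtain ⟨R, hR0, hR⟩ := hM2.exists_eventually_measureReal_le hν
  set I := ∫ t, L t ^ p ∂μ
  set A := ε / (2 * (R + 1))
  have hA : 0 < A := by positivity
  have hAR : A * R < ε / 2 := by
    rw [div_mul_eq_mul_div, div_lt_div_iff₀ (by positivity) two_pos]
    nlinarith
  have htail : Tendsto (fun z : ℝ => A ^ (1 - p) * I / (ν (Set.Icc (-z) z)).toReal)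
      atTop (𝓝 0) :=
    tendsto_const_nhds.div_atTop hν.tendsto_measureReal_Icc
  filter_upwards [hR, htail.eventually (gt_mem_nhds (half_pos hε)),
    hν.tendsto_measureReal_Icc.eventually_gt_atTop 0] with z hμz htail_z hνz
  have hint := setIntegral_norm_le_of_norm_le (s := Set.Icc (-z) z) measurableSet_Icc
    isCompact_Icc.measure_ne_top (hφ.1.norm.integrableOn_Icc (μ := μ)) hp hA hL0 hLp hφL
  set νz := (ν (Set.Icc (-z) z)).toReal
  rw [Real.norm_eq_abs, abs_of_nonneg (mul_nonneg (inv_nonneg.2 hνz.le)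
    (setIntegral_nonneg measurableSet_Icc fun t _ => norm_nonneg (φ t)))]
  calc νz⁻¹ * ∫ t in Set.Icc (-z) z, ‖φ t‖ ∂μ
      ≤ νz⁻¹ * (A * (μ (Set.Icc (-z) z)).toReal + A ^ (1 - p) * I) := by gcongr
    _ ≤ νz⁻¹ * (A * (R * νz) + A ^ (1 - p) * I) := by gcongr
    _ = A * R + A ^ (1 - p) * I / νz := by field_simp
    _ < ε := by linarith

end Ergodic

theorem composition_pap_general (μ ν : Measure ℝ) (hμ : InM μ) (hν : InM ν) (hM2 : M2 μ ν)
    (p : ℝ) (hp : 1 < p)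
    (Λ : ℝ → ℝ → ℝ) (hΛapu : APU Λ)
    (LΛ : ℝ → ℝ)
    (hLp : Integrable (fun t => LΛ t ^ p) μ)
    (hLip : ∀ t u v : ℝ, |Λ t u - Λ t v| ≤ LΛ t * |u - v|)
    (y : ℝ → ℝ) (hy : PAP μ ν y) (θ : ℝ) :
    PAP μ ν (fun s => Λ s (y (s - θ))) := by
  have := hμ.isFiniteMeasureOnCompacts_s5
  obtain ⟨⟨hy_cont, C, hC⟩, -⟩ := hy
  have hC0 : 0 ≤ C := (norm_nonneg _).trans (hC 0)
  have hL0 : ∀ t, 0 ≤ LΛ t := fun t => by simpa using (abs_nonneg _).trans (hLip t 1 0)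
  obtain ⟨M, hM⟩ := hΛapu.exists_bound (isCompact_Icc (a := -C) (b := C))
  have hf_cont : Continuous fun s => Λ s (y (s - θ)) :=
    hΛapu.1.comp (continuous_id.prodMk (hy_cont.comp (continuous_sub_right θ)))
  have hg : AP fun s => Λ s 0 := hΛapu.ap_apply 0
  refine ⟨⟨hf_cont, M, fun s => hM s _ (abs_le.1 (hC _))⟩, _, _, hg, ?_,
    fun s => (add_sub_cancel _ _).symm⟩
  refine Erg.of_norm_le_of_integrable_rpow (L := fun t => LΛ t * C) hν hM2 hp.le
    ⟨hf_cont.sub hg.1, M + M, fun s => ?_⟩ (fun t => mul_nonneg (hL0 t) hC0) ?_ fun s => ?_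
  · exact (norm_sub_le _ _).trans
      (add_le_add (hM s _ (abs_le.1 (hC _))) (hM s 0 ⟨neg_nonpos.2 hC0, hC0⟩))
  · simpa only [Real.mul_rpow (hL0 _) hC0] using hLp.mul_const (C ^ p)
  · calc ‖Λ s (y (s - θ)) - Λ s 0‖ ≤ LΛ s * |y (s - θ) - 0| := hLip s _ 0
      _ ≤ LΛ s * C := by rw [sub_zero]; exact mul_le_mul_of_nonneg_left (hC _) (hL0 s)

theorem composition_pap (μ ν : Measure ℝ) (hμ : InM μ) (hν : InM ν) (hM2 : M2 μ ν)
    (p : ℝ) (hp : 1 < p)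
    (Λ : ℝ → ℝ → ℝ) (hΛapu : APU Λ)
    (LΛ : ℝ → ℝ) (hLcont : Continuous LΛ) (hLpos : ∀ t, 0 < LΛ t)
    (hLp : Integrable (fun t => LΛ t ^ p) μ)
    (hLip : ∀ t u v : ℝ, |Λ t u - Λ t v| ≤ LΛ t * |u - v|)
    (y : ℝ → ℝ) (hy : PAP μ ν y) (θ : ℝ) :
    PAP μ ν (fun s => Λ s (y (s - θ))) :=
  composition_pap_general μ ν hμ hν hM2 p hp Λ hΛapu LΛ hLp hLip y hy θ
end
end

section
/- Let μ ∈ 𝓜 and let p > 1. Let Λ : ℝ×ℝ → ℝ be continuous, almost periodic in t uniformly in x on compact sets, and Lipschitz in the second variable with a positive continuous function L^Λ : ℝ → (0,∞) satisfying ∫_ℝ L^Λ(t)^p dμ(t) < ∞ and |Λ(t,u) − Λ(t,v)| ≤ L^Λ(t)|u−v| for all t, u, v ∈ ℝ. Then for every y ∈ 𝓟𝓐𝓟(ℝ,ℝ,μ) := 𝓟𝓐𝓟(ℝ,ℝ,μ,μ) and every θ ∈ ℝ, the function s ↦ Λ(s, y(s−θ)) belongs to 𝓟𝓐𝓟(ℝ,ℝ,μ).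 -/
open MeasureTheory Filter Topology

noncomputable section

/-!
Write `Λ (s, y (s - θ)) = Λ (s, 0) + φ s`. The first summand is almost periodic, and by the
Lipschitz condition `|φ s| ≤ M L^Λ(s)` with `M = sup |y|`. Pointwise `L ≤ δ + L^p / δ^(p-1)`,
so the `μ`-mean of `|φ|` over `[-z, z]` is at most `M δ + M ‖L^p‖₁ / (δ^(p-1) μ([-z, z]))`,
and `μ([-z, z]) → ∞` because `μ(ℝ) = ∞`.
-/

lemma le_add_rpow_div_rpow_sub_one {x δ p : ℝ} (hx : 0 ≤ x) (hδ : 0 < δ) (hp : 1 ≤ p) :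
    x ≤ δ + x ^ p / δ ^ (p - 1) := by
  rcases le_or_gt x δ with hxδ | hδx
  · have : 0 ≤ x ^ p / δ ^ (p - 1) := by positivity
    linarith
  · have hx0 : 0 < x := hδ.trans hδx
    have hpow : x * δ ^ (p - 1) ≤ x ^ p :=
      calc x * δ ^ (p - 1) ≤ x * x ^ (p - 1) := by gcongr
        _ = x ^ p := by rw [Real.rpow_sub_one hx0.ne', mul_div_cancel₀ _ hx0.ne']
    have := (le_div_iff₀ (by positivity)).2 hpow
    linarith

namespace APU

variable {F : ℝ → ℝ → ℝ}

lemma ap_apply_s6 (hF : APU F) (x : ℝ) : AP (fun t => F t x) := by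
  refine ⟨hF.1.comp (continuous_id.prodMk continuous_const), fun ε hε => ?_⟩
  obtain ⟨l, hl, hper⟩ := hF.2 {x} isCompact_singleton ε hε
  exact ⟨l, hl, fun a => (hper a).imp fun τ ⟨hτ, hclose⟩ => ⟨hτ, fun t => hclose t x rfl⟩⟩

/-- A translation number in `[-t, -t + l]` moves `t` into `[0, l]`, where `F` is bounded on
the compact set `[0, l] × K`. -/
lemma exists_bound_s6 (hF : APU F) {K : Set ℝ} (hK : IsCompact K) :
    ∃ B, ∀ t, ∀ x ∈ K, |F t x| ≤ B := by
  obtain ⟨l, -, hper⟩ := hF.2 K hK 1 one_pos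
  obtain ⟨B, hB⟩ :=
    (isCompact_Icc (a := 0) (b := l)).prod hK |>.exists_bound_of_continuousOn hF.1.continuousOn
  refine ⟨B + 1, fun t x hx => ?_⟩
  obtain ⟨τ, hτ, hclose⟩ := hper (-t)
  have hshift : |F (t + τ) x| ≤ B :=
    hB (t + τ, x) ⟨⟨by linarith [hτ.1], by linarith [hτ.2]⟩, hx⟩
  have := abs_sub_abs_le_abs_sub (F t x) (F (t + τ) x)
  rw [abs_sub_comm] at this
  linarith [hclose t x hx]

end APU

namespace InM

variable {μ : Measure ℝ}

lemma measure_Icc_lt_top (hμ : InM μ) (a b : ℝ) : μ (Set.Icc a b) < ⊤ := by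
  rcases le_or_gt a b with hab | hab
  · exact hμ.2 a b hab
  · simp [Set.Icc_eq_empty_of_lt hab]

lemma tendsto_measure_Icc_atTop (hμ : InM μ) :
    Tendsto (fun z : ℝ => (μ (Set.Icc (-z) z)).toReal) atTop atTop := by
  have hmono : Monotone (fun z : ℝ => Set.Icc (-z) z) :=
    fun _ _ h => Set.Icc_subset_Icc (neg_le_neg h) h
  have hunion : ⋃ z : ℝ, Set.Icc (-z) z = Set.univ :=
    Set.eq_univ_of_forall fun x => Set.mem_iUnion.2 ⟨|x|, neg_abs_le x, le_abs_self x⟩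
  have htop : Tendsto (fun z : ℝ => μ (Set.Icc (-z) z)) atTop (𝓝 ⊤) := by
    have := tendsto_measure_iUnion_atTop (μ := μ) hmono
    rwa [hunion, hμ.1] at this
  refine tendsto_atTop.2 fun b => ?_
  filter_upwards [ENNReal.tendsto_nhds_top_iff_nnreal.1 htop b.toNNReal] with z hz
  exact (ENNReal.ofReal_le_iff_le_toReal (hμ.measure_Icc_lt_top _ _).ne).1 hz.le

lemma tendsto_inv_measure_mul_setIntegral (hμ : InM μ) {h : ℝ → ℝ} (hh : Integrable h μ) :
    Tendsto (fun z : ℝ => (μ (Set.Icc (-z) z)).toReal⁻¹ * ∫ t in Set.Icc (-z) z, h t ∂μ)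
      atTop (𝓝 0) := by
  refine hμ.tendsto_measure_Icc_atTop.inv_tendsto_atTop.zero_mul_isBoundedUnder_le ?_
  refine isBoundedUnder_of ⟨∫ t, ‖h t‖ ∂μ, fun z => ?_⟩
  exact (norm_integral_le_integral_norm _).trans
    (setIntegral_le_integral hh.norm (ae_of_all _ fun _ => norm_nonneg _))

lemma inv_measure_mul_setIntegral_le_add (hμ : InM μ) {f h : ℝ → ℝ} {δ : ℝ} (hδ : 0 ≤ δ)
    (hf : ∀ t, 0 ≤ f t) (hh : Integrable h μ) (hfh : ∀ t, f t ≤ δ + h t) (z : ℝ) :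
    (μ (Set.Icc (-z) z)).toReal⁻¹ * ∫ t in Set.Icc (-z) z, f t ∂μ ≤
      δ + (μ (Set.Icc (-z) z)).toReal⁻¹ * ∫ t in Set.Icc (-z) z, h t ∂μ := by
  set m := (μ (Set.Icc (-z) z)).toReal
  have hconst : IntegrableOn (fun _ => δ) (Set.Icc (-z) z) μ :=
    integrableOn_const (hμ.measure_Icc_lt_top _ _).ne
  have hint : ∫ t in Set.Icc (-z) z, f t ∂μ ≤ δ * m + ∫ t in Set.Icc (-z) z, h t ∂μ :=
    calc ∫ t in Set.Icc (-z) z, f t ∂μ ≤ ∫ t in Set.Icc (-z) z, (δ + h t) ∂μ :=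
          integral_mono_of_nonneg (ae_of_all _ hf) (hconst.add hh.integrableOn) (ae_of_all _ hfh)
      _ = δ * m + ∫ t in Set.Icc (-z) z, h t ∂μ := by
          rw [integral_add hconst hh.integrableOn, setIntegral_const, smul_eq_mul, mul_comm]; rfl
  calc m⁻¹ * ∫ t in Set.Icc (-z) z, f t ∂μ
      ≤ m⁻¹ * (δ * m + ∫ t in Set.Icc (-z) z, h t ∂μ) := by gcongr
    _ = δ * (m⁻¹ * m) + m⁻¹ * ∫ t in Set.Icc (-z) z, h t ∂μ := by ring
    _ ≤ δ + m⁻¹ * ∫ t in Set.Icc (-z) z, h t ∂μ := by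
        gcongr
        rcases eq_or_ne m 0 with hm | hm <;> simp [hm, hδ]

variable {E : Type*} [NormedAddCommGroup E]

lemma erg_of_forall_norm_le_add_integrable (hμ : InM μ) {φ : ℝ → E} (hφ : BC φ)
    (hdom : ∀ δ > 0, ∃ h : ℝ → ℝ, Integrable h μ ∧ ∀ t, ‖φ t‖ ≤ δ + h t) : Erg μ μ φ := by
  refine ⟨hφ, Metric.tendsto_nhds.2 fun ε hε => ?_⟩
  obtain ⟨h, hh, hφh⟩ := hdom (ε / 2) (half_pos hε)
  filter_upwards [(hμ.tendsto_inv_measure_mul_setIntegral hh).eventually_lt_const (half_pos hε)]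
    with z hz
  have hle := hμ.inv_measure_mul_setIntegral_le_add (half_pos hε).le (fun t => norm_nonneg (φ t))
    hh hφh z
  have hnonneg : 0 ≤ (μ (Set.Icc (-z) z)).toReal⁻¹ * ∫ t in Set.Icc (-z) z, ‖φ t‖ ∂μ :=
    mul_nonneg (inv_nonneg.2 ENNReal.toReal_nonneg) (integral_nonneg fun _ => norm_nonneg _)
  rw [Real.dist_0_eq_abs, abs_of_nonneg hnonneg]
  linarith

lemma erg_of_norm_le_of_integrable_rpow (hμ : InM μ) {p : ℝ} (hp : 1 ≤ p) {φ : ℝ → E}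
    (hφ : BC φ) {L : ℝ → ℝ} (hL : ∀ t, 0 ≤ L t) (hLp : Integrable (fun t => L t ^ p) μ)
    (hφL : ∀ t, ‖φ t‖ ≤ L t) : Erg μ μ φ :=
  hμ.erg_of_forall_norm_le_add_integrable hφ fun δ hδ =>
    ⟨fun t => L t ^ p / δ ^ (p - 1), hLp.div_const _,
      fun t => (hφL t).trans (le_add_rpow_div_rpow_sub_one (hL t) hδ hp)⟩

end InM

theorem composition_pap_single_measure_general (μ : Measure ℝ) (hμ : InM μ)
    (p : ℝ) (hp : 1 < p)
    (Λ : ℝ → ℝ → ℝ) (hΛapu : APU Λ)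
    (LΛ : ℝ → ℝ)
    (hLp : Integrable (fun t => LΛ t ^ p) μ)
    (hLip : ∀ t u v : ℝ, |Λ t u - Λ t v| ≤ LΛ t * |u - v|)
    (y : ℝ → ℝ) (hy : PAP μ μ y) (θ : ℝ) :
    PAP μ μ (fun s => Λ s (y (s - θ))) := by
  obtain ⟨⟨hycont, M, hyM⟩, -⟩ := hy
  have hM : 0 ≤ M := (norm_nonneg _).trans (hyM 0)
  have hL : ∀ t, 0 ≤ LΛ t := fun t => (abs_nonneg _).trans (by simpa using hLip t 1 0)
  obtain ⟨B, hB⟩ := hΛapu.exists_bound_s6 (isCompact_Icc (a := -M) (b := M))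
  have hf : BC (fun s => Λ s (y (s - θ))) :=
    ⟨hΛapu.1.comp (continuous_id.prodMk (hycont.comp (continuous_sub_right θ))), B,
      fun s => hB s _ (abs_le.1 (hyM _))⟩
  have hg := hΛapu.ap_apply_s6 0
  refine ⟨hf, _, fun s => Λ s (y (s - θ)) - Λ s 0, hg, ?_, fun s => by ring⟩
  have hφ : BC (fun s => Λ s (y (s - θ)) - Λ s 0) :=
    ⟨hf.1.sub hg.1, B + B, fun s => (abs_sub _ _).trans
      (add_le_add (hB s _ (abs_le.1 (hyM _))) (hB s 0 ⟨neg_nonpos.2 hM, hM⟩))⟩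
  refine hμ.erg_of_norm_le_of_integrable_rpow hp.le hφ (L := fun t => M * LΛ t)
    (fun t => mul_nonneg hM (hL t)) ?_ fun s => ?_
  · simp_rw [Real.mul_rpow hM (hL _)]
    exact hLp.const_mul _
  · calc |Λ s (y (s - θ)) - Λ s 0| ≤ LΛ s * |y (s - θ) - 0| := hLip s _ 0
      _ ≤ M * LΛ s := by
        rw [sub_zero, mul_comm]
        exact mul_le_mul_of_nonneg_right (hyM _) (hL s)

theorem composition_pap_single_measure (μ : Measure ℝ) (hμ : InM μ)
    (p : ℝ) (hp : 1 < p)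
    (Λ : ℝ → ℝ → ℝ) (hΛapu : APU Λ)
    (LΛ : ℝ → ℝ) (hLcont : Continuous LΛ) (hLpos : ∀ t, 0 < LΛ t)
    (hLp : Integrable (fun t => LΛ t ^ p) μ)
    (hLip : ∀ t u v : ℝ, |Λ t u - Λ t v| ≤ LΛ t * |u - v|)
    (y : ℝ → ℝ) (hy : PAP μ μ y) (θ : ℝ) :
    PAP μ μ (fun s => Λ s (y (s - θ))) :=
  composition_pap_single_measure_general μ hμ p hp Λ hΛapu LΛ hLp hLip y hy θ
end
end

section
/- Let c : ℝ → ℝ be almost periodic with c* := inf_{t∈ℝ} c(t) > 0, and let F : ℝ → ℝ be almost periodic. Then the function t ↦ ∫_{−∞}^{t} e^{−∫_{s}^{t} c(u) du} F(s) ds is well defined (the integral converges absolutely, being dominated by ‖F‖_∞ ∫_{−∞}^{t} e^{−c*(t−s)} ds), bounded, and almost periodic on ℝ. -/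
open MeasureTheory Filter Topology

noncomputable section

/-! The kernel `exp (-∫ u in Ioc s t, c u)` is at most `exp (c₀ (s - t))`, `c₀ = inf c`, which
gives absolute convergence and the bound `‖F‖_∞ / c₀`. The integral commutes with translating
`c` and `F` together, and it is Lipschitz in `(c, F)` for the sup norm on `{c ≥ c₀}`; hence every
`η`-almost period of the pair `(c, F)` is an `O(η)`-almost period of the integral. Since `(c, F)`
is almost periodic (common almost periods of two almost periodic functions are relatively dense)
and uniformly continuous, this yields both continuity and almost periodicity. -/

open Set Real

variable {E E' : Type*} [NormedAddCommGroup E] [NormedAddCommGroup E']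

def IsAlmostPeriod (f : ℝ → E) (ε τ : ℝ) : Prop :=
  ∀ t, ‖f (t + τ) - f t‖ < ε

namespace IsAlmostPeriod

variable {f : ℝ → E} {ε η τ σ : ℝ}

theorem neg (h : IsAlmostPeriod f ε τ) : IsAlmostPeriod f ε (-τ) := fun t => by
  simpa [norm_sub_rev] using h (t + -τ)

theorem add (hτ : IsAlmostPeriod f ε τ) (hσ : IsAlmostPeriod f η σ) :
    IsAlmostPeriod f (ε + η) (τ + σ) := fun t =>
  calc ‖f (t + (τ + σ)) - f t‖ ≤ ‖f (t + σ + τ) - f (t + σ)‖ + ‖f (t + σ) - f t‖ := by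
        rw [add_right_comm, ← add_assoc]; exact norm_sub_le_norm_sub_add_norm_sub _ _ _
    _ < ε + η := add_lt_add (hτ _) (hσ t)

theorem sub (hτ : IsAlmostPeriod f ε τ) (hσ : IsAlmostPeriod f η σ) :
    IsAlmostPeriod f (ε + η) (τ - σ) := by
  simpa only [sub_eq_add_neg] using hτ.add hσ.neg

end IsAlmostPeriod

theorem isAlmostPeriod_prod_iff {f : ℝ → E} {g : ℝ → E'} {ε τ : ℝ} :
    IsAlmostPeriod (fun t => (f t, g t)) ε τ ↔ IsAlmostPeriod f ε τ ∧ IsAlmostPeriod g ε τ := by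
  simp only [IsAlmostPeriod, Prod.norm_def, Prod.mk_sub_mk, max_lt_iff, forall_and]

namespace AP

variable {f : ℝ → E}

theorem exists_norm_le (hf : AP f) : ∃ M, ∀ t, ‖f t‖ ≤ M := by
  obtain ⟨l, -, hl⟩ := hf.2 1 one_pos
  obtain ⟨M, hM⟩ := isCompact_Icc.exists_bound_of_continuousOn (hf.1.continuousOn (s := Icc 0 l))
  refine ⟨M + 1, fun t => ?_⟩
  obtain ⟨τ, hτ, hτf⟩ := hl (-t)
  calc ‖f t‖ ≤ ‖f (t + τ)‖ + ‖f (t + τ) - f t‖ := by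
        rw [norm_sub_rev]; exact norm_le_insert' _ _
    _ ≤ M + 1 := add_le_add (hM _ ⟨by linarith [hτ.1], by linarith [hτ.2]⟩) (hτf t).le

theorem uniformContinuous_s8 (hf : AP f) : UniformContinuous f := by
  refine Metric.uniformContinuous_iff.2 fun ε hε => ?_
  obtain ⟨l, -, hl⟩ := hf.2 (ε / 3) (by positivity)
  obtain ⟨δ, hδ, hδf⟩ := Metric.uniformContinuousOn_iff.1
    (isCompact_Icc.uniformContinuousOn_of_continuous (hf.1.continuousOn (s := Icc (-1) (l + 1))))
    (ε / 3) (by positivity)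
  refine ⟨min δ 1, by positivity, fun x y hxy => ?_⟩
  obtain ⟨τ, hτ, hτf⟩ := hl (-y)
  have hxy' := abs_lt.1 (hxy.trans_le (min_le_right _ _))
  have hx : x + τ ∈ Icc (-1) (l + 1) := ⟨by linarith [hτ.1], by linarith [hτ.2]⟩
  have hy : y + τ ∈ Icc (-1) (l + 1) := ⟨by linarith [hτ.1], by linarith [hτ.2]⟩
  have hδxy : dist (x + τ) (y + τ) < δ := by
    rw [dist_add_right]; exact hxy.trans_le (min_le_left _ _)
  calc dist (f x) (f y)
      ≤ dist (f x) (f (x + τ)) + dist (f (x + τ)) (f (y + τ)) + dist (f (y + τ)) (f y) :=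
        dist_triangle4 _ _ _ _
    _ < ε / 3 + ε / 3 + ε / 3 := by
        gcongr
        exacts [by rw [dist_comm, dist_eq_norm]; exact hτf x, hδf _ hx _ hy hδxy,
          by rw [dist_eq_norm]; exact hτf y]
    _ = ε := by ring

theorem exists_isAlmostPeriod_of_abs_lt (hf : AP f) {ε : ℝ} (hε : 0 < ε) :
    ∃ δ > 0, ∀ s, |s| < δ → IsAlmostPeriod f ε s := by
  obtain ⟨δ, hδ, h⟩ := Metric.uniformContinuous_iff.1 hf.uniformContinuous_s8 ε hε
  refine ⟨δ, hδ, fun s hs t => ?_⟩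
  rw [← dist_eq_norm]
  exact h (by rwa [Real.dist_eq, add_sub_cancel_left])

theorem of_isAlmostPeriod_imp {g : ℝ → E'} (hg : AP g)
    (h : ∀ ε > 0, ∃ η > 0, ∀ τ, IsAlmostPeriod g η τ → IsAlmostPeriod f ε τ) : AP f := by
  refine ⟨Metric.continuous_iff.2 fun t ε hε => ?_, fun ε hε => ?_⟩
  · obtain ⟨η, hη, hgf⟩ := h ε hε
    obtain ⟨δ, hδ, hsmall⟩ := hg.exists_isAlmostPeriod_of_abs_lt hη
    refine ⟨δ, hδ, fun s hs => ?_⟩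
    simpa [dist_eq_norm] using hgf _ (hsmall (s - t) (by rwa [← Real.dist_eq])) t
  · obtain ⟨η, hη, hgf⟩ := h ε hε
    obtain ⟨l, hl, hτ⟩ := hg.2 η hη
    exact ⟨l, hl, fun a => (hτ a).imp fun τ ⟨hτa, hτg⟩ => ⟨hτa, hgf τ hτg⟩⟩

/-- Pigeonhole on the differences `d a = τ₁ a - τ₂ a ∈ [-l, l]` of individual almost periods:
if `d a` and `d a'` are `δ`-close, then `τ₁ a - τ₁ a'` is an almost period of `f` and, up to a
translation by less than `δ`, also the almost period `τ₂ a - τ₂ a'` of `g`. -/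
theorem prod {g : ℝ → E'} (hf : AP f) (hg : AP g) : AP fun t => (f t, g t) := by
  refine ⟨hf.1.prodMk hg.1, fun ε hε => ?_⟩
  obtain ⟨δ, hδ, hsmall⟩ := hg.exists_isAlmostPeriod_of_abs_lt (half_pos hε)
  obtain ⟨l₁, hl₁, hf'⟩ := hf.2 (ε / 2) (half_pos hε)
  obtain ⟨l₂, -, hg'⟩ := hg.2 (ε / 4) (by positivity)
  choose τ₁ hτ₁ hfτ₁ using hf'
  choose τ₂ hτ₂ hgτ₂ using hg'
  set l := max l₁ l₂
  have hl₁l : l₁ ≤ l := le_max_left _ _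
  have hl₂l : l₂ ≤ l := le_max_right _ _
  set d : ℝ → ℝ := fun a => τ₁ a - τ₂ a with hd
  have hdl : range d ⊆ Icc (-l) l := by
    rintro _ ⟨a, rfl⟩
    exact ⟨by linarith [(hτ₁ a).1, (hτ₂ a).2], by linarith [(hτ₁ a).2, (hτ₂ a).1]⟩
  obtain ⟨S, -, hSfin, hS⟩ := exists_subset_image_finite_and (s := univ)
    (p := fun T => d '' univ ⊆ ⋃ y ∈ T, Metric.ball y δ) |>.1 <| by
      simpa only [image_univ] using
        Metric.finite_approx_of_totallyBounded ((totallyBounded_Icc (-l) l).subset hdl) δ hδ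
  have hS' : ∀ a, ∃ a' ∈ S, |d a - d a'| < δ := fun a => by
    simpa [← Real.dist_eq] using hS (mem_image_of_mem d (mem_univ a))
  obtain ⟨A, hA⟩ := isBounded_iff_forall_norm_le.1 hSfin.isBounded
  obtain ⟨a₀, ha₀, -⟩ := hS' 0
  refine ⟨2 * A + 2 * l, by linarith [norm_nonneg a₀, hA a₀ ha₀], fun y => ?_⟩
  obtain ⟨a', ha'S, ha'⟩ := hS' (y + A + l)
  have ha'A := abs_le.1 (hA a' ha'S)
  refine ⟨τ₁ (y + A + l) - τ₁ a',
    ⟨by linarith [(hτ₁ (y + A + l)).1, (hτ₁ a').2], by linarith [(hτ₁ (y + A + l)).2, (hτ₁ a').1]⟩,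
    isAlmostPeriod_prod_iff.2 ⟨?_, ?_⟩⟩
  · simpa only [add_halves] using IsAlmostPeriod.sub (hfτ₁ (y + A + l)) (hfτ₁ a')
  · have h := (IsAlmostPeriod.sub (hgτ₂ (y + A + l)) (hgτ₂ a')).add (hsmall _ ha')
    rw [show ε / 4 + ε / 4 + ε / 2 = ε by ring] at h
    convert h using 1
    simp only [hd]
    ring

end AP

theorem abs_exp_neg_sub_exp_neg_le {a b m : ℝ} (ha : m ≤ a) (hb : m ≤ b) :
    |exp (-a) - exp (-b)| ≤ exp (-m) * |a - b| := by
  wlog hba : b ≤ a generalizing a b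
  · rw [abs_sub_comm, abs_sub_comm a]
    exact this hb ha (le_of_not_ge hba)
  rw [abs_sub_comm, abs_of_nonneg (sub_nonneg.2 (exp_le_exp.2 (neg_le_neg hba))),
    abs_of_nonneg (sub_nonneg.2 hba)]
  calc exp (-b) - exp (-a) = exp (-b) * (1 - exp (-(a - b))) := by
        rw [mul_sub, ← exp_add]; ring_nf
    _ ≤ exp (-m) * (a - b) :=
        mul_le_mul (exp_le_exp.2 (neg_le_neg hb)) (by linarith [one_sub_le_exp_neg (a - b)])
          (sub_nonneg.2 (exp_le_one_iff.2 (by linarith))) (exp_nonneg _)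

theorem mul_exp_neg_mul_le {a : ℝ} (ha : 0 < a) (u : ℝ) :
    u * exp (-(a * u)) ≤ 2 / a * exp (-(a / 2 * u)) := by
  have hu : u ≤ 2 / a * exp (a / 2 * u) := by
    rw [div_mul_eq_mul_div, le_div_iff₀ ha]
    nlinarith [add_one_le_exp (a / 2 * u)]
  calc u * exp (-(a * u)) ≤ 2 / a * exp (a / 2 * u) * exp (-(a * u)) := by gcongr
    _ = 2 / a * exp (-(a / 2 * u)) := by rw [mul_assoc, ← exp_add]; ring_nf

section ExpDominated

variable {g : ℝ → ℝ} {a C t : ℝ}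

theorem mul_exp_mul_sub_eq (a C t : ℝ) :
    (fun s => C * exp (a * (s - t))) = fun s => C * exp (-(a * t)) * exp (a * s) := by
  ext s
  rw [mul_sub, sub_eq_add_neg, exp_add]
  ring

theorem integrableOn_mul_exp_mul_sub_Iic (ha : 0 < a) (C t : ℝ) :
    IntegrableOn (fun s => C * exp (a * (s - t))) (Iic t) := by
  rw [mul_exp_mul_sub_eq]
  exact (integrableOn_exp_mul_Iic ha t).const_mul _

theorem integral_mul_exp_mul_sub_Iic (ha : 0 < a) (C t : ℝ) :
    ∫ s in Iic t, C * exp (a * (s - t)) = C / a := by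
  rw [mul_exp_mul_sub_eq, integral_const_mul, integral_exp_mul_Iic ha, mul_div_assoc',
    mul_assoc, ← exp_add, neg_add_cancel, exp_zero, mul_one]

theorem integrableOn_Iic_of_abs_le_exp (ha : 0 < a)
    (hg : AEStronglyMeasurable g (volume.restrict (Iic t)))
    (h : ∀ s ≤ t, |g s| ≤ C * exp (a * (s - t))) : IntegrableOn g (Iic t) :=
  (integrableOn_mul_exp_mul_sub_Iic ha C t).mono' hg (ae_restrict_of_forall_mem measurableSet_Iic h)

theorem abs_setIntegral_Iic_le_of_abs_le_exp (ha : 0 < a)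
    (h : ∀ s ≤ t, |g s| ≤ C * exp (a * (s - t))) : |∫ s in Iic t, g s| ≤ C / a := by
  rw [← integral_mul_exp_mul_sub_Iic ha C t]
  exact norm_integral_le_of_norm_le (f := g) (integrableOn_mul_exp_mul_sub_Iic ha C t)
    (ae_restrict_of_forall_mem measurableSet_Iic h)

end ExpDominated

section DampedIntegral

variable {c c' F F' : ℝ → ℝ} {c₀ M η s t : ℝ}

def dampedIntegral (c F : ℝ → ℝ) (t : ℝ) : ℝ :=
  ∫ s in Iic t, exp (-∫ u in Ioc s t, c u) * F s

theorem dampedIntegral_comp_add_right (c F : ℝ → ℝ) (τ t : ℝ) :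
    dampedIntegral (fun u => c (u + τ)) (fun s => F (s + τ)) t = dampedIntegral c F (t + τ) := by
  have shift (g : ℝ → ℝ) (S : Set ℝ) : ∫ x in (· + τ) ⁻¹' S, g (x + τ) = ∫ y in S, g y :=
    (measurePreserving_add_right volume τ).setIntegral_preimage_emb
      (measurableEmbedding_addRight τ) g S
  have inner (s : ℝ) : ∫ u in Ioc s t, c (u + τ) = ∫ u in Ioc (s + τ) (t + τ), c u := by
    rw [← shift c, preimage_add_const_Ioc, add_sub_cancel_right, add_sub_cancel_right]
  simp only [dampedIntegral, inner]
  rw [← shift (fun s => exp (-∫ u in Ioc s (t + τ), c u) * F s), preimage_add_const_Iic,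
    add_sub_cancel_right]

theorem mul_sub_le_setIntegral_Ioc (hc : Continuous c) (hc₀ : ∀ u, c₀ ≤ c u) (hst : s ≤ t) :
    c₀ * (t - s) ≤ ∫ u in Ioc s t, c u := by
  have h := setIntegral_ge_of_const_le_real (measurableSet_Ioc (a := s) (b := t))
    measure_Ioc_lt_top.ne (fun u _ => hc₀ u) (hc.integrableOn_Ioc (μ := volume))
  rwa [volume_real_Ioc_of_le hst] at h

theorem abs_setIntegral_Ioc_sub_le (hc : Continuous c) (hc' : Continuous c')
    (hcc' : ∀ u, |c' u - c u| ≤ η) (hst : s ≤ t) :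
    |(∫ u in Ioc s t, c' u) - ∫ u in Ioc s t, c u| ≤ η * (t - s) := by
  rw [← integral_sub hc'.integrableOn_Ioc hc.integrableOn_Ioc]
  have h := norm_setIntegral_le_of_norm_le_const (f := fun u => c' u - c u)
    (measure_Ioc_lt_top (μ := volume) (a := s) (b := t)) fun u _ => hcc' u
  rwa [volume_real_Ioc_of_le hst] at h

theorem continuousOn_setIntegral_Ioc (hc : Continuous c) (t : ℝ) :
    ContinuousOn (fun s => ∫ u in Ioc s t, c u) (Iic t) := by
  have : Continuous fun s => ∫ u in s..t, c u :=
    (intervalIntegral.continuous_primitive (fun a b => hc.intervalIntegrable a b) t).neg.congr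
      fun s => (intervalIntegral.integral_symm t s).symm
  exact this.continuousOn.congr fun s hs => (intervalIntegral.integral_of_le hs).symm

theorem abs_dampedIntegrand_le (hc : Continuous c) (hc₀ : ∀ u, c₀ ≤ c u)
    (hM : ∀ s, |F s| ≤ M) (hst : s ≤ t) :
    |exp (-∫ u in Ioc s t, c u) * F s| ≤ M * exp (c₀ * (s - t)) := by
  rw [abs_mul, abs_exp, mul_comm M]
  exact mul_le_mul (exp_le_exp.2 (by linarith [mul_sub_le_setIntegral_Ioc hc hc₀ hst])) (hM s)
    (abs_nonneg _) (exp_nonneg _)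

theorem integrableOn_dampedIntegrand (hc : Continuous c) (hc₀ : ∀ u, c₀ ≤ c u) (hc₀pos : 0 < c₀)
    (hF : Continuous F) (hM : ∀ s, |F s| ≤ M) (t : ℝ) :
    IntegrableOn (fun s => exp (-∫ u in Ioc s t, c u) * F s) (Iic t) :=
  integrableOn_Iic_of_abs_le_exp hc₀pos
    (((continuousOn_setIntegral_Ioc hc t).neg.rexp.mul hF.continuousOn).aestronglyMeasurable
      measurableSet_Iic)
    fun _ hs => abs_dampedIntegrand_le hc hc₀ hM hs

theorem abs_dampedIntegral_le (hc : Continuous c) (hc₀ : ∀ u, c₀ ≤ c u) (hc₀pos : 0 < c₀)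
    (hM : ∀ s, |F s| ≤ M) (t : ℝ) : |dampedIntegral c F t| ≤ M / c₀ :=
  abs_setIntegral_Iic_le_of_abs_le_exp hc₀pos fun _ hs => abs_dampedIntegrand_le hc hc₀ hM hs

theorem abs_dampedIntegrand_sub_le (hc : Continuous c) (hc' : Continuous c')
    (hc₀ : ∀ u, c₀ ≤ c u) (hc₀' : ∀ u, c₀ ≤ c' u) (hc₀pos : 0 < c₀) (hM : ∀ s, |F s| ≤ M)
    (hcc' : ∀ u, |c' u - c u| ≤ η) (hFF' : ∀ s, |F' s - F s| ≤ η) (hst : s ≤ t) :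
    |exp (-∫ u in Ioc s t, c' u) * F' s - exp (-∫ u in Ioc s t, c u) * F s|
      ≤ (1 + 2 * M / c₀) * η * exp (c₀ / 2 * (s - t)) := by
  set A := ∫ u in Ioc s t, c u
  set A' := ∫ u in Ioc s t, c' u
  have hM₀ : 0 ≤ M := (abs_nonneg _).trans (hM s)
  have hexp : exp (-A') ≤ exp (c₀ / 2 * (s - t)) :=
    exp_le_exp.2 (by nlinarith [mul_sub_le_setIntegral_Ioc hc' hc₀' hst])
  have hdexp : |exp (-A') - exp (-A)| ≤ η * ((t - s) * exp (-(c₀ * (t - s)))) :=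
    calc |exp (-A') - exp (-A)| ≤ exp (-(c₀ * (t - s))) * |A' - A| :=
          abs_exp_neg_sub_exp_neg_le (mul_sub_le_setIntegral_Ioc hc' hc₀' hst)
            (mul_sub_le_setIntegral_Ioc hc hc₀ hst)
      _ ≤ exp (-(c₀ * (t - s))) * (η * (t - s)) := by
          gcongr; exact abs_setIntegral_Ioc_sub_le hc hc' hcc' hst
      _ = η * ((t - s) * exp (-(c₀ * (t - s)))) := by ring
  have hu : (t - s) * exp (-(c₀ * (t - s))) ≤ 2 / c₀ * exp (c₀ / 2 * (s - t)) := by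
    convert mul_exp_neg_mul_le hc₀pos (t - s) using 3; ring
  calc |exp (-A') * F' s - exp (-A) * F s|
      = |exp (-A') * (F' s - F s) + F s * (exp (-A') - exp (-A))| := by ring_nf
    _ ≤ exp (-A') * η + M * (η * ((t - s) * exp (-(c₀ * (t - s))))) := by
        refine (abs_add_le _ _).trans (add_le_add ?_ ?_) <;> rw [abs_mul]
        · rw [abs_exp]; gcongr; exact hFF' s
        · gcongr; exact hM s
    _ ≤ exp (c₀ / 2 * (s - t)) * η + M * (η * (2 / c₀ * exp (c₀ / 2 * (s - t)))) := by
        have hη : 0 ≤ η := (abs_nonneg _).trans (hFF' s)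
        gcongr
    _ = (1 + 2 * M / c₀) * η * exp (c₀ / 2 * (s - t)) := by ring

theorem abs_dampedIntegral_sub_le (hc : Continuous c) (hc' : Continuous c')
    (hc₀ : ∀ u, c₀ ≤ c u) (hc₀' : ∀ u, c₀ ≤ c' u) (hc₀pos : 0 < c₀) (hF : Continuous F)
    (hF' : Continuous F') (hM : ∀ s, |F s| ≤ M) (hcc' : ∀ u, |c' u - c u| ≤ η)
    (hFF' : ∀ s, |F' s - F s| ≤ η) (t : ℝ) :
    |dampedIntegral c' F' t - dampedIntegral c F t| ≤ 2 * (1 + 2 * M / c₀) / c₀ * η := by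
  have hM' (s : ℝ) : |F' s| ≤ M + η := by
    linarith [abs_sub_abs_le_abs_sub (F' s) (F s), hM s, hFF' s]
  have hint := integrableOn_dampedIntegrand hc' hc₀' hc₀pos hF' hM' t
  have hint₀ := integrableOn_dampedIntegrand hc hc₀ hc₀pos hF hM t
  rw [dampedIntegral, dampedIntegral, ← integral_sub hint hint₀]
  calc _ ≤ (1 + 2 * M / c₀) * η / (c₀ / 2) :=
        abs_setIntegral_Iic_le_of_abs_le_exp (half_pos hc₀pos) fun _ hs =>
          abs_dampedIntegrand_sub_le hc hc' hc₀ hc₀' hc₀pos hM hcc' hFF' hs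
    _ = 2 * (1 + 2 * M / c₀) / c₀ * η := by field_simp

end DampedIntegral

theorem convolution_preserves_ap (c F : ℝ → ℝ) (hc : AP c)
    (hcpos : 0 < ⨅ t, c t) (hF : AP F) :
    (∀ t : ℝ, IntegrableOn
      (fun s => Real.exp (-(∫ u in Set.Ioc s t, c u)) * F s) (Set.Iic t)) ∧
    (∃ C : ℝ, ∀ t : ℝ,
      |∫ s in Set.Iic t, Real.exp (-(∫ u in Set.Ioc s t, c u)) * F s| ≤ C) ∧
    AP (fun t => ∫ s in Set.Iic t, Real.exp (-(∫ u in Set.Ioc s t, c u)) * F s) := by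
  set c₀ := ⨅ t, c t
  -- an infimum over a set that is not bounded below is `0` in `ℝ`
  have hc₀ (u : ℝ) : c₀ ≤ c u :=
    ciInf_le (not_not.1 fun h => hcpos.ne' (Real.iInf_of_not_bddBelow h)) u
  obtain ⟨M, hM⟩ := hF.exists_norm_le
  refine ⟨integrableOn_dampedIntegrand hc.1 hc₀ hcpos hF.1 hM,
    ⟨M / c₀, abs_dampedIntegral_le hc.1 hc₀ hcpos hM⟩,
    (hc.prod hF).of_isAlmostPeriod_imp fun ε hε => ?_⟩
  set K := 2 * (1 + 2 * M / c₀) / c₀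
  have hM₀ : 0 ≤ M := (norm_nonneg _).trans (hM 0)
  have hK : 0 ≤ K := by positivity
  refine ⟨ε / (K + 1), by positivity, fun τ hτ t => ?_⟩
  obtain ⟨hcτ, hFτ⟩ := isAlmostPeriod_prod_iff.1 hτ
  calc |dampedIntegral c F (t + τ) - dampedIntegral c F t| ≤ K * (ε / (K + 1)) := by
        rw [← dampedIntegral_comp_add_right]
        exact abs_dampedIntegral_sub_le hc.1 (hc.1.comp (continuous_add_const τ)) hc₀
          (fun u => hc₀ _) hcpos hF.1 (hF.1.comp (continuous_add_const τ)) hM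
          (fun u => (hcτ u).le) (fun s => (hFτ s).le) t
    _ < ε := by
        rw [← mul_div_assoc, div_lt_iff₀ (by positivity)]
        linarith
end
end
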